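/- arXiv:2110.14062 — 3 statements merged into one kernel-verified Lean document; each statement's English description precedes it below -/
import Mathlib

section
/- Let P ⊆ ℝⁿ be a polytope and v ∈ ℝⁿ. Then (P,v) is quasi-positively oriented if and only if the coherent subdivision π(F^φ) is tight, i.e. for every z ∈ P the polytope P ∩ ρ_zP admits a unique minimizer and a unique maximizer of ⟨−,v⟩ if and only if dim F + dim G = dim((F+G)/2) for every (F,G) ∈ F^φ. -/
open scoped BigOperators

noncomputable section

/-- Vectors in `ℝⁿ`. -/
abbrev Vec (n : ℕ) := Fin n → ℝ

/-- The standard scalar product on `ℝⁿ`. -/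
def dot {n : ℕ} (x y : Vec n) : ℝ := ∑ i, x i * y i

/-- A polytope is the convex hull of a finite set of points. -/
def IsPolytope {n : ℕ} (P : Set (Vec n)) : Prop :=
  ∃ S : Finset (Vec n), P = convexHull ℝ (S : Set (Vec n))

/-- A face of `P`: either `P` itself (take `c = 0`) or the subset of `P` where some linear
functional attains its maximum over `P`. -/
def IsFace {n : ℕ} (P F : Set (Vec n)) : Prop :=
  ∃ c : Vec n, F = {x ∈ P | ∀ y ∈ P, dot c y ≤ dot c x}

/-- Dimension of a subset of `ℝⁿ`: the rank of the direction of its affine span. -/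
noncomputable def sdim {n : ℕ} (A : Set (Vec n)) : ℕ :=
  Module.finrank ℝ (affineSpan ℝ A).direction

/-- The normal cone of a face `F` of `P`. -/
def normalCone {n : ℕ} (P F : Set (Vec n)) : Set (Vec n) :=
  {c | F ⊆ {x ∈ P | ∀ y ∈ P, dot c y ≤ dot c x}}

/-- `coneOf X`: nonnegative linear combinations of finitely many elements of `X`. -/
def coneOf {n : ℕ} (X : Set (Vec n)) : Set (Vec n) :=
  {v | ∃ (k : ℕ) (x : Fin k → Vec n) (l : Fin k → ℝ),
      (∀ i, x i ∈ X) ∧ (∀ i, 0 ≤ l i) ∧ v = ∑ i, l i • x i}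

/-- The reflection `ρ_z P = 2z - P` of `P` with respect to `z`. -/
def reflP {n : ℕ} (z : Vec n) (P : Set (Vec n)) : Set (Vec n) :=
  (fun x => (2 : ℝ) • z - x) '' P

/-- An edge is a 1-dimensional face. -/
def IsEdge {n : ℕ} (P E : Set (Vec n)) : Prop := IsFace P E ∧ sdim E = 1

/-- `(P, v)` is oriented if `v` is not perpendicular to any edge of `P`. -/
def Oriented {n : ℕ} (P : Set (Vec n)) (v : Vec n) : Prop :=
  ∀ E, IsEdge P E → ∀ d ∈ (affineSpan ℝ E).direction, d ≠ 0 → dot d v ≠ 0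

/-- `(P, v)` is positively oriented if `(P ∩ ρ_z P, v)` is oriented for every `z ∈ P`. -/
def PosOriented {n : ℕ} (P : Set (Vec n)) (v : Vec n) : Prop :=
  ∀ z ∈ P, Oriented (P ∩ reflP z P) v

/-- `x` is the minimizer of `⟨-, v⟩` on `P`. -/
def IsBotOf {n : ℕ} (P : Set (Vec n)) (v x : Vec n) : Prop :=
  x ∈ P ∧ ∀ y ∈ P, dot v x ≤ dot v y

/-- `x` is the maximizer of `⟨-, v⟩` on `P`. -/
def IsTopOf {n : ℕ} (P : Set (Vec n)) (v x : Vec n) : Prop :=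
  x ∈ P ∧ ∀ y ∈ P, dot v y ≤ dot v x

/-- `(P, v)` is quasi-oriented if `⟨-, v⟩` has a unique minimizer and a unique maximizer on `P`. -/
def QuasiOriented {n : ℕ} (P : Set (Vec n)) (v : Vec n) : Prop :=
  (∃! x, IsBotOf P v x) ∧ (∃! x, IsTopOf P v x)

/-- `(P, v)` is quasi-positively oriented if `(P ∩ ρ_z P, v)` is quasi-oriented for all `z ∈ P`. -/
def QuasiPosOriented {n : ℕ} (P : Set (Vec n)) (v : Vec n) : Prop :=
  ∀ z ∈ P, QuasiOriented (P ∩ reflP z P) v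

/-- The polytope `P^φ = π^φ(P × P) ⊆ ℝ^{n+1}`, where `π^φ(x,y) = ((x+y)/2, ⟨x - y, v⟩)`. -/
def Pphi {n : ℕ} (P : Set (Vec n)) (v : Vec n) : Set (Vec (n + 1)) :=
  {w | ∃ x ∈ P, ∃ y ∈ P, w = Fin.snoc ((1 / 2 : ℝ) • (x + y)) (dot (x - y) v)}

/-- The pair of faces `(F, G)` belongs to `F^φ`: there are no `x ∈ F`, `y ∈ G`, `λ > 0` with
`(π(x,y), φ(x,y) - λ) ∈ P^φ`. -/
def InFphi {n : ℕ} (P : Set (Vec n)) (v : Vec n) (F G : Set (Vec n)) : Prop :=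
  ¬ ∃ x ∈ F, ∃ y ∈ G, ∃ lam : ℝ, 0 < lam ∧
      (Fin.snoc ((1 / 2 : ℝ) • (x + y)) (dot (x - y) v - lam) : Vec (n + 1)) ∈ Pphi P v

/-- The set `(A + B)/2`. -/
def avgSet {n : ℕ} (A B : Set (Vec n)) : Set (Vec n) :=
  {z | ∃ x ∈ A, ∃ y ∈ B, z = (1 / 2 : ℝ) • (x + y)}

/-- The coherent subdivision `π(F^φ)` is tight. -/
def TightSub {n : ℕ} (P : Set (Vec n)) (v : Vec n) : Prop :=
  ∀ F G : Set (Vec n), IsFace P F → IsFace P G → F.Nonempty → G.Nonempty →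
    InFphi P v F G → sdim F + sdim G = sdim (avgSet F G)

/-- `d` is a direction of an edge of `P ∩ ρ_z P` for some `z ∈ P`; the hyperplanes of the
fundamental hyperplane arrangement `H_P` are the orthogonal complements of such directions. -/
def EdgeDir {n : ℕ} (P : Set (Vec n)) (d : Vec n) : Prop :=
  d ≠ 0 ∧ ∃ z ∈ P, ∃ E, IsEdge (P ∩ reflP z P) E ∧ d ∈ (affineSpan ℝ E).direction

/-- The cone `cone(-N_P(F) ∪ N_P(G))`. -/
def diagCone {n : ℕ} (P F G : Set (Vec n)) : Set (Vec n) :=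
  coneOf ((Neg.neg '' normalCone P F) ∪ normalCone P G)

/-!
Both directions compare minimizers of `⟨-, v⟩` on `P ∩ ρ_z P` with pairs of faces in `F^φ`.
If `(F, G) ∈ F^φ`, `x ∈ F`, `y ∈ G` and `x + y = 2z`, then `x` minimizes `⟨-, v⟩` on
`P ∩ ρ_z P`, since a smaller value would put a point of `P^φ` strictly below `π^φ(x, y)`.
So if `F` and `G` share a nonzero direction `d`, the pairs `(x, y)` and `(x + εd, y - εd)` give two
minimizers for the same `z`. Conversely, two minimizers `x₁ ≠ x₂` give pairs `(xᵢ, 2z - xᵢ)` with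
the same image on the lower boundary of the polytope `P^φ`. Farkas' lemma provides a lower
supporting hyperplane there, and it cuts out a pair `(F, G) ∈ F^φ` whose affine spans both
contain `x₂ - x₁`, so `π(F^φ)` is not tight.
-/

section ConvexCones

open scoped Pointwise

variable {𝕜 E : Type*} [Field 𝕜] [LinearOrder 𝕜] [IsStrictOrderedRing 𝕜]
  [AddCommGroup E] [Module 𝕜 E]

theorem Convex.exists_pos_smul_mem_of_mem_hull {D s : Set E} (hD : Convex 𝕜 D) (h0 : (0 : E) ∈ D)
    (hs : s ⊆ D) {u : E} (hu : u ∈ PointedCone.hull 𝕜 s) : ∃ ε : 𝕜, 0 < ε ∧ ε • u ∈ D := by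
  have hle : PointedCone.hull 𝕜 s ≤
      (ConvexCone.hull 𝕜 D).toPointedCone (ConvexCone.subset_hull h0) :=
    Submodule.span_le.2 (hs.trans ConvexCone.subset_hull)
  obtain ⟨r, hr, hu⟩ := (ConvexCone.mem_hull_of_convex hD).1 (hle hu)
  exact ⟨r⁻¹, inv_pos.2 hr, (Set.mem_smul_set_iff_inv_smul_mem₀ hr.ne' _ _).1 hu⟩

theorem Convex.exists_pos_forall_smul_mem_sub_of_mem_vectorSpan {C : Set E} (hC : Convex 𝕜 C)
    (hne : C.Nonempty) {d : E} (hd : d ∈ vectorSpan 𝕜 C) :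
    ∃ ε : 𝕜, 0 < ε ∧ ∀ t : 𝕜, 0 ≤ t → t ≤ ε → t • d ∈ C - C := by
  set K := ConvexCone.hull 𝕜 (C - C)
  have hD : Convex 𝕜 (C - C) := hC.sub hC
  have h0 : (0 : E) ∈ C - C := by obtain ⟨x, hx⟩ := hne; exact ⟨x, hx, x, hx, sub_self x⟩
  have hneg : ∀ x ∈ K, -x ∈ K := by
    intro x hx
    obtain ⟨r, hr, _, ⟨a, ha, b, hb, rfl⟩, rfl⟩ := (ConvexCone.mem_hull_of_convex hD).1 hx
    exact (ConvexCone.mem_hull_of_convex hD).2 ⟨r, hr, b - a, ⟨b, hb, a, ha, rfl⟩, by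
      simp only [smul_sub, neg_sub]⟩
  suffices d ∈ K by
    obtain ⟨r, hr, hd⟩ := (ConvexCone.mem_hull_of_convex hD).1 this
    have hrd := (Set.mem_smul_set_iff_inv_smul_mem₀ hr.ne' _ _).1 hd
    refine ⟨r⁻¹, inv_pos.2 hr, fun t ht0 ht => ?_⟩
    have := (hD.starConvex h0).smul_mem hrd (div_nonneg ht0 (inv_pos.2 hr).le)
      (div_le_one_of_le₀ ht (inv_pos.2 hr).le)
    rwa [smul_smul, div_mul_cancel₀ _ (inv_pos.2 hr).ne'] at this
  rw [vectorSpan_def] at hd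
  induction hd using Submodule.span_induction with
  | mem x hx => exact ConvexCone.subset_hull hx
  | zero => exact ConvexCone.subset_hull h0
  | add x y _ _ hx hy => exact K.add_mem hx hy
  | smul a x _ hx =>
    rcases lt_trichotomy a 0 with ha | rfl | ha
    · rw [← neg_smul_neg]
      exact K.smul_mem (neg_pos.2 ha) (hneg x hx)
    · rw [zero_smul]
      exact ConvexCone.subset_hull h0
    · exact K.smul_mem ha hx

theorem PointedCone.hull_image_sub_smul_le {s t : Set E} {a : E} (ha : a ∈ s) (hts : t ⊆ s)
    {f : Module.Dual 𝕜 E} (hfa : 0 < f a) (hft : ∀ q ∈ t, f q ≤ 0) :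
    PointedCone.hull 𝕜 ((fun q => q - (f q / f a) • a) '' t) ≤ PointedCone.hull 𝕜 s := by
  refine Submodule.span_le.2 ?_
  rintro _ ⟨q, hq, rfl⟩
  beta_reduce
  rw [SetLike.mem_coe, sub_eq_add_neg, ← neg_smul]
  exact add_mem (Submodule.subset_span (hts hq)) (PointedCone.smul_mem _
    (neg_nonneg.2 (div_nonpos_of_nonpos_of_nonneg (hft q hq) hfa.le)) (Submodule.subset_span ha))

theorem PointedCone.mem_hull_or_exists_dual (s : Finset E) (u : E) :
    u ∈ PointedCone.hull 𝕜 (s : Set E) ∨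
      ∃ f : Module.Dual 𝕜 E, (∀ q ∈ s, f q ≤ 0) ∧ 0 < f u := by
  classical
  induction h : s.card using Nat.strong_induction_on generalizing s u with
  | _ k ih =>
  rcases s.eq_empty_or_nonempty with rfl | ⟨a, ha⟩
  · by_cases hu : u = 0
    · exact .inl (hu ▸ zero_mem _)
    · obtain ⟨f, hf⟩ := Module.Projective.exists_dual_eq_one 𝕜 hu
      exact .inr ⟨f, by simp, hf ▸ one_pos⟩
  set s' := s.erase a
  have hs' : s'.card < k := h ▸ Finset.card_erase_lt_of_mem ha
  rcases ih _ hs' s' u rfl with hu | ⟨f, hf, hfu⟩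
  · exact .inl (Submodule.span_mono (by simp [s']) hu)
  by_cases hfa : f a ≤ 0
  · refine .inr ⟨f, fun q hq => ?_, hfu⟩
    rcases eq_or_ne q a with rfl | hqa
    · exact hfa
    · exact hf q (Finset.mem_erase.2 ⟨hqa, hq⟩)
  push Not at hfa
  -- Fourier–Motzkin step: eliminate `a` by projecting along it onto `ker f`
  set g : E →ₗ[𝕜] E := LinearMap.id - (f a)⁻¹ • f.smulRight a with hg
  have hg_apply : ∀ q, g q = q - (f q / f a) • a := fun q => by
    simp [hg, div_eq_inv_mul, mul_smul]
  have hga : g a = 0 := by rw [hg_apply, div_self hfa.ne', one_smul, sub_self]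
  rcases ih _ ((Finset.card_image_le).trans_lt hs') (s'.image g) (g u) rfl with hgu | ⟨d, hd, hdu⟩
  · left
    have hle := PointedCone.hull_image_sub_smul_le (s := (s : Set E)) ha
      (by simp [s']) hfa hf
    rw [Finset.coe_image, show ⇑g = _ from funext hg_apply] at hgu
    have hu : u = (u - (f u / f a) • a) + (f u / f a) • a := by abel
    rw [hu]
    exact add_mem (hle hgu) (PointedCone.smul_mem _ (div_pos hfu hfa).le (Submodule.subset_span ha))
  · refine .inr ⟨d ∘ₗ g, fun q hq => ?_, hdu⟩
    rcases eq_or_ne q a with rfl | hqa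
    · simp [hga]
    · exact hd _ (Finset.mem_image_of_mem g (Finset.mem_erase.2 ⟨hqa, hq⟩))

theorem exists_dual_le_of_forall_add_smul_notMem {T : Finset E} {p u : E}
    (hp : p ∈ convexHull 𝕜 (T : Set E))
    (hu : ∀ ε : 𝕜, 0 < ε → p + ε • u ∉ convexHull 𝕜 (T : Set E)) :
    ∃ f : Module.Dual 𝕜 E, 0 < f u ∧ ∀ q ∈ convexHull 𝕜 (T : Set E), f q ≤ f p := by
  classical
  set K := convexHull 𝕜 (T : Set E)
  rcases PointedCone.mem_hull_or_exists_dual (𝕜 := 𝕜) (T.image (fun q => -p + q)) u with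
    hcone | ⟨f, hf, hfu⟩
  · have hD : Convex 𝕜 ((fun q => -p + q) '' K) := (convex_convexHull 𝕜 _).translate (-p)
    have hsub : ((T.image (fun q => -p + q) : Finset E) : Set E) ⊆ (fun q => -p + q) '' K := by
      rw [Finset.coe_image]
      exact Set.image_mono (subset_convexHull 𝕜 (T : Set E))
    obtain ⟨ε, hε, q, hq, hqu⟩ := hD.exists_pos_smul_mem_of_mem_hull ⟨p, hp, by simp⟩ hsub hcone
    exact absurd (by rwa [← hqu, add_neg_cancel_left]) (hu ε hε)
  · refine ⟨f, hfu, fun q hq => ?_⟩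
    refine convexHull_min (fun q hq => ?_) (convex_halfSpace_le f.isLinear (f p)) hq
    have := hf _ (Finset.mem_image_of_mem _ hq)
    simp only [map_add, map_neg] at this
    show f q ≤ f p
    linarith

end ConvexCones

section Polytopes

variable {n : ℕ}

theorem dot_eq_dotProduct (x y : Vec n) : dot x y = x ⬝ᵥ y := rfl

theorem IsPolytope.isCompact {P : Set (Vec n)} (hP : IsPolytope P) : IsCompact P := by
  obtain ⟨S, rfl⟩ := hP
  exact S.finite_toSet.isCompact_convexHull (𝕜 := ℝ)

theorem IsPolytope.convex {P : Set (Vec n)} (hP : IsPolytope P) : Convex ℝ P := by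
  obtain ⟨S, rfl⟩ := hP
  exact convex_convexHull ℝ _

theorem IsFace.subset {P F : Set (Vec n)} (hF : IsFace P F) : F ⊆ P := by
  obtain ⟨c, rfl⟩ := hF
  exact fun x hx => hx.1

theorem IsFace.convex {P F : Set (Vec n)} (hP : Convex ℝ P) (hF : IsFace P F) : Convex ℝ F := by
  obtain ⟨c, rfl⟩ := hF
  have hlin : IsLinearMap ℝ (dot c) := (dotProductEquiv ℝ (Fin n) c).isLinear
  convert hP.inter (convex_iInter₂ fun y (_ : y ∈ P) => convex_halfSpace_ge hlin (dot c y)) using 1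
  ext x
  simp

def maxFace (P : Set (Vec n)) (α : Module.Dual ℝ (Vec n)) : Set (Vec n) :=
  {x ∈ P | ∀ y ∈ P, α y ≤ α x}

theorem isFace_maxFace (P : Set (Vec n)) (α : Module.Dual ℝ (Vec n)) : IsFace P (maxFace P α) := by
  classical
  refine ⟨(dotProductEquiv ℝ (Fin n)).symm α, ?_⟩
  have h : ∀ x, dot ((dotProductEquiv ℝ (Fin n)).symm α) x = α x := fun x => by
    rw [dot_eq_dotProduct, ← dotProductEquiv_apply_apply, LinearEquiv.apply_symm_apply]
  simp only [maxFace, h]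

theorem mem_reflP {z w : Vec n} {P : Set (Vec n)} : w ∈ reflP z P ↔ (2 : ℝ) • z - w ∈ P :=
  ⟨fun ⟨x, hx, hxw⟩ => by rwa [← hxw, sub_sub_cancel], fun h => ⟨_, h, sub_sub_cancel _ _⟩⟩

theorem two_smul_sub_mem_inter_reflP {z w : Vec n} {P : Set (Vec n)} (hw : w ∈ P ∩ reflP z P) :
    (2 : ℝ) • z - w ∈ P ∩ reflP z P :=
  ⟨mem_reflP.1 hw.2, mem_reflP.2 (by rw [sub_sub_cancel]; exact hw.1)⟩

theorem isTopOf_inter_reflP_iff {z v x : Vec n} {P : Set (Vec n)} :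
    IsTopOf (P ∩ reflP z P) v x ↔ IsBotOf (P ∩ reflP z P) v ((2 : ℝ) • z - x) := by
  simp only [IsTopOf, IsBotOf, dot_eq_dotProduct]
  refine ⟨fun ⟨hx, h⟩ => ⟨two_smul_sub_mem_inter_reflP hx, fun y hy => ?_⟩,
    fun ⟨hx, h⟩ => ⟨by simpa using two_smul_sub_mem_inter_reflP hx, fun y hy => ?_⟩⟩
  · have := h _ (two_smul_sub_mem_inter_reflP hy)
    simp only [dotProduct_sub] at this ⊢
    linarith
  · have := h _ (two_smul_sub_mem_inter_reflP hy)
    simp only [dotProduct_sub] at this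
    linarith

theorem quasiOriented_inter_reflP_iff {z v : Vec n} {P : Set (Vec n)} :
    QuasiOriented (P ∩ reflP z P) v ↔ ∃! x, IsBotOf (P ∩ reflP z P) v x := by
  have hreflect : Function.Involutive fun x : Vec n => (2 : ℝ) • z - x := sub_sub_cancel _
  refine ⟨And.left, fun h => ⟨h, ?_⟩⟩
  simp only [isTopOf_inter_reflP_iff]
  exact (hreflect.toPerm _).existsUnique_congr_right.2 h

end Polytopes

section Dimension

variable {n : ℕ}

theorem avgSet_comm (F G : Set (Vec n)) : avgSet F G = avgSet G F := by
  ext z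
  constructor <;> rintro ⟨x, hx, y, hy, rfl⟩ <;> exact ⟨y, hy, x, hx, by rw [add_comm]⟩

theorem vectorSpan_le_vectorSpan_avgSet {F G : Set (Vec n)} (hG : G.Nonempty) :
    vectorSpan ℝ F ≤ vectorSpan ℝ (avgSet F G) := by
  obtain ⟨y, hy⟩ := hG
  rw [vectorSpan_def, Submodule.span_le]
  intro _ hw
  obtain ⟨x, hx, x', hx', rfl⟩ := Set.mem_vsub.1 hw
  have h₁ : (1 / 2 : ℝ) • (x + y) ∈ avgSet F G := ⟨x, hx, y, hy, rfl⟩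
  have h₂ : (1 / 2 : ℝ) • (x' + y) ∈ avgSet F G := ⟨x', hx', y, hy, rfl⟩
  have e : (2 : ℝ) • ((1 / 2 : ℝ) • (x + y) -ᵥ (1 / 2 : ℝ) • (x' + y)) = x -ᵥ x' := by
    simp only [vsub_eq_sub]
    module
  exact e ▸ Submodule.smul_mem _ (2 : ℝ) (vsub_mem_vectorSpan ℝ h₁ h₂)

theorem vectorSpan_avgSet {F G : Set (Vec n)} (hF : F.Nonempty) (hG : G.Nonempty) :
    vectorSpan ℝ (avgSet F G) = vectorSpan ℝ F ⊔ vectorSpan ℝ G := by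
  refine le_antisymm ?_ (sup_le (vectorSpan_le_vectorSpan_avgSet hG)
    (avgSet_comm F G ▸ vectorSpan_le_vectorSpan_avgSet hF))
  rw [vectorSpan_def, Submodule.span_le]
  intro _ hw
  obtain ⟨_, ⟨x, hx, y, hy, rfl⟩, _, ⟨x', hx', y', hy', rfl⟩, rfl⟩ := Set.mem_vsub.1 hw
  have hxy : (1 / 2 : ℝ) • (x + y) -ᵥ (1 / 2 : ℝ) • (x' + y') =
      (1 / 2 : ℝ) • (x -ᵥ x') + (1 / 2 : ℝ) • (y -ᵥ y') := by
    simp only [vsub_eq_sub]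
    module
  rw [SetLike.mem_coe, hxy]
  exact add_mem (Submodule.mem_sup_left (Submodule.smul_mem _ _ (vsub_mem_vectorSpan ℝ hx hx')))
    (Submodule.mem_sup_right (Submodule.smul_mem _ _ (vsub_mem_vectorSpan ℝ hy hy')))

theorem sdim_add_sdim_eq_sdim_avgSet_iff {F G : Set (Vec n)} (hF : F.Nonempty) (hG : G.Nonempty) :
    sdim F + sdim G = sdim (avgSet F G) ↔ Disjoint (vectorSpan ℝ F) (vectorSpan ℝ G) := by
  have h := Submodule.finrank_sup_add_finrank_inf_eq (vectorSpan ℝ F) (vectorSpan ℝ G)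
  rw [sdim, sdim, sdim, direction_affineSpan, direction_affineSpan, direction_affineSpan,
    vectorSpan_avgSet hF hG, disjoint_iff, ← Submodule.finrank_eq_zero]
  omega

end Dimension

section Forward

variable {n : ℕ} {P F G : Set (Vec n)} {v : Vec n}

theorem InFphi.isBotOf (hIn : InFphi P v F G) (hFP : F ⊆ P) (hGP : G ⊆ P) {x y z : Vec n}
    (hx : x ∈ F) (hy : y ∈ G) (hz : x + y = (2 : ℝ) • z) : IsBotOf (P ∩ reflP z P) v x := by
  obtain rfl : y = (2 : ℝ) • z - x := eq_sub_of_add_eq' hz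
  refine ⟨⟨hFP hx, mem_reflP.2 (hGP hy)⟩, fun w hw => ?_⟩
  by_contra! hlt
  refine hIn ⟨x, hx, _, hy, 2 * (dot v x - dot v w), by linarith, w, hw.1, _, mem_reflP.1 hw.2, ?_⟩
  congr 1
  · module
  · simp only [dot_eq_dotProduct, dotProduct_comm _ v, dotProduct_sub, dotProduct_smul, smul_eq_mul]
    ring

theorem disjoint_vectorSpan_of_inFphi (hP : Convex ℝ P)
    (huniq : ∀ z ∈ P, ∃! x, IsBotOf (P ∩ reflP z P) v x) (hF : IsFace P F) (hG : IsFace P G)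
    (hFne : F.Nonempty) (hGne : G.Nonempty) (hIn : InFphi P v F G) :
    Disjoint (vectorSpan ℝ F) (vectorSpan ℝ G) := by
  rw [Submodule.disjoint_def]
  intro d hdF hdG
  obtain ⟨ε₁, hε₁, hF'⟩ := (hF.convex hP).exists_pos_forall_smul_mem_sub_of_mem_vectorSpan hFne hdF
  obtain ⟨ε₂, hε₂, hG'⟩ := (hG.convex hP).exists_pos_forall_smul_mem_sub_of_mem_vectorSpan hGne hdG
  set ε := min ε₁ ε₂
  -- `x' = x + ε d` and `y' = y - ε d` have the same midpoint `z` as `x` and `y`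
  obtain ⟨x', hx', x, hx, hxx'⟩ := Set.mem_sub.1 (hF' ε (le_min hε₁.le hε₂.le) (min_le_left _ _))
  obtain ⟨y, hy, y', hy', hyy'⟩ := Set.mem_sub.1 (hG' ε (le_min hε₁.le hε₂.le) (min_le_right _ _))
  set z : Vec n := (1 / 2 : ℝ) • (x + y)
  have hz : x + y = (2 : ℝ) • z := by module
  have hz' : x' + y' = (2 : ℝ) • z := by
    rw [← hz, ← sub_eq_zero]
    linear_combination (norm := module) hxx' - hyy'
  have hzP : z ∈ P := by
    simpa only [z, smul_add] using hP (hF.subset hx) (hG.subset hy) (by norm_num) (by norm_num)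
      (by norm_num)
  have hxx := (huniq z hzP).unique (hIn.isBotOf hF.subset hG.subset hx' hy' hz')
    (hIn.isBotOf hF.subset hG.subset hx hy hz)
  rw [hxx, sub_self, eq_comm, smul_eq_zero] at hxx'
  exact hxx'.resolve_left (lt_min hε₁ hε₂).ne'

end Forward

section Backward

variable {n : ℕ} {P : Set (Vec n)} {v : Vec n}

/-- `π^φ` with its first component doubled. -/
def phiMap (v : Vec n) : Vec n × Vec n →ₗ[ℝ] Vec n × ℝ where
  toFun q := (q.1 + q.2, dot (q.1 - q.2) v)
  map_add' q q' := by
    simp only [Prod.fst_add, Prod.snd_add, dot_eq_dotProduct, Prod.mk_add_mk, add_dotProduct,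
      sub_dotProduct]
    congr 1 <;> abel
  map_smul' r q := by
    simp only [Prod.smul_fst, Prod.smul_snd, dot_eq_dotProduct, ← smul_sub, smul_dotProduct,
      RingHom.id_apply, Prod.smul_mk, smul_add]

theorem phiMap_apply (x y : Vec n) : phiMap v (x, y) = (x + y, dot (x - y) v) := rfl

theorem image_phiMap_prod {S : Finset (Vec n)} (hS : P = convexHull ℝ (S : Set (Vec n))) :
    phiMap v '' (P ×ˢ P) = convexHull ℝ ((S ×ˢ S).image (phiMap v) : Set (Vec n × ℝ)) := by
  classical
  rw [Finset.coe_image, ← LinearMap.image_convexHull, Finset.coe_product, convexHull_prod, ← hS]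

theorem comp_phiMap_apply (f : Module.Dual ℝ (Vec n × ℝ)) (x y : Vec n) :
    f (phiMap v (x, y)) =
      (f ∘ₗ phiMap v ∘ₗ LinearMap.inl ℝ _ _) x + (f ∘ₗ phiMap v ∘ₗ LinearMap.inr ℝ _ _) y := by
  simp only [LinearMap.comp_apply, ← map_add, LinearMap.inl_apply, LinearMap.inr_apply,
    Prod.mk_add_mk, add_zero, zero_add]

theorem exists_dual_lower_support (hP : IsPolytope P) {x z : Vec n}
    (hx : IsBotOf (P ∩ reflP z P) v x) :
    ∃ f : Module.Dual ℝ (Vec n × ℝ), f (0, 1) < 0 ∧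
      ∀ x' ∈ P, ∀ y' ∈ P, f (phiMap v (x', y')) ≤ f (phiMap v (x, (2 : ℝ) • z - x)) := by
  obtain ⟨S, hS⟩ := hP
  have hK := image_phiMap_prod (v := v) hS
  -- a point `(2z, φ - ε)` of `P^φ` would come from some `x' ∈ P ∩ ρ_z P` below `x`
  have hray : ∀ ε : ℝ, 0 < ε → phiMap v (x, (2 : ℝ) • z - x) + ε • ((0 : Vec n), (-1 : ℝ)) ∉
      phiMap v '' (P ×ˢ P) := by
    rintro ε hε ⟨⟨x', y'⟩, ⟨hx', hy'⟩, heq⟩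
    simp only [phiMap_apply, Prod.mk_add_mk, Prod.smul_mk, smul_zero, add_zero, Prod.mk.injEq,
      add_sub_cancel] at heq
    obtain ⟨hsum, hφ⟩ := heq
    obtain rfl : y' = (2 : ℝ) • z - x' := eq_sub_of_add_eq' hsum
    have := hx.2 x' ⟨hx', mem_reflP.2 hy'⟩
    simp only [dot_eq_dotProduct, dotProduct_comm _ v, dotProduct_sub, dotProduct_smul,
      smul_eq_mul] at this hφ
    linarith
  rw [hK] at hray
  obtain ⟨f, hfu, hf⟩ := exists_dual_le_of_forall_add_smul_notMem
    (by rw [← hK]; exact ⟨_, ⟨hx.1.1, mem_reflP.1 hx.1.2⟩, rfl⟩) hray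
  refine ⟨f, ?_, fun x' hx' y' hy' => hf _ (by rw [← hK]; exact ⟨_, ⟨hx', hy'⟩, rfl⟩)⟩
  rw [← neg_neg ((0 : Vec n), (1 : ℝ)), map_neg, Prod.neg_mk, neg_zero]
  exact neg_neg_of_pos hfu

theorem mem_maxFace_of_forall_add_le {α β : Module.Dual ℝ (Vec n)} {x y : Vec n} (hx : x ∈ P)
    (hy : y ∈ P) (h : ∀ x' ∈ P, ∀ y' ∈ P, α x' + β y' ≤ α x + β y) :
    x ∈ maxFace P α ∧ y ∈ maxFace P β :=
  ⟨⟨hx, fun x' hx' => by linarith [h x' hx' y hy]⟩, ⟨hy, fun y' hy' => by linarith [h x hx y' hy']⟩⟩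

theorem inFphi_maxFace (f : Module.Dual ℝ (Vec n × ℝ)) (hf : f (0, 1) < 0) :
    InFphi P v (maxFace P (f ∘ₗ phiMap v ∘ₗ LinearMap.inl ℝ _ _))
      (maxFace P (f ∘ₗ phiMap v ∘ₗ LinearMap.inr ℝ _ _)) := by
  rintro ⟨x, hx, y, hy, lam, hlam, x', hx', y', hy', heq⟩
  obtain ⟨hmid, hφ⟩ := Fin.snoc_inj.1 heq
  have hphi : phiMap v (x', y') = phiMap v (x, y) - lam • ((0 : Vec n), (1 : ℝ)) := by
    rw [phiMap_apply, phiMap_apply, Prod.smul_mk, smul_zero, smul_eq_mul, mul_one, Prod.mk_sub_mk,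
      sub_zero, ← hφ]
    congr 1
    simpa using congrArg ((2 : ℝ) • ·) hmid.symm
  have hle := add_le_add (hx.2 x' hx') (hy.2 y' hy')
  rw [← comp_phiMap_apply, ← comp_phiMap_apply, hphi, map_sub, map_smul, smul_eq_mul] at hle
  nlinarith

theorem IsBotOf.eq_of_tightSub (hP : IsPolytope P) (hT : TightSub P v) {z x₁ x₂ : Vec n}
    (h₁ : IsBotOf (P ∩ reflP z P) v x₁) (h₂ : IsBotOf (P ∩ reflP z P) v x₂) : x₂ = x₁ := by
  obtain ⟨f, hf0, hf⟩ := exists_dual_lower_support hP h₁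
  set α := f ∘ₗ phiMap v ∘ₗ LinearMap.inl ℝ _ _
  set β := f ∘ₗ phiMap v ∘ₗ LinearMap.inr ℝ _ _
  -- every minimizer `x` gives a point `(x, 2z - x)` of `P × P` with the same image under `π^φ`
  have hmem : ∀ x, IsBotOf (P ∩ reflP z P) v x →
      x ∈ maxFace P α ∧ (2 : ℝ) • z - x ∈ maxFace P β := by
    intro x hx
    have hdot : dot v x = dot v x₁ := le_antisymm (hx.2 x₁ h₁.1) (h₁.2 x hx.1)
    have hphi : phiMap v (x, (2 : ℝ) • z - x) = phiMap v (x₁, (2 : ℝ) • z - x₁) := by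
      simp only [phiMap_apply, add_sub_cancel, Prod.mk.injEq, true_and, dot_eq_dotProduct,
        dotProduct_comm _ v, dotProduct_sub, dotProduct_smul, smul_eq_mul] at hdot ⊢
      rw [hdot]
    refine mem_maxFace_of_forall_add_le hx.1.1 (mem_reflP.1 hx.1.2) fun x' hx' y' hy' => ?_
    rw [← comp_phiMap_apply, ← comp_phiMap_apply, hphi]
    exact hf x' hx' y' hy'
  obtain ⟨hx₁F, hy₁G⟩ := hmem x₁ h₁
  obtain ⟨hx₂F, hy₂G⟩ := hmem x₂ h₂
  have hdisj := (sdim_add_sdim_eq_sdim_avgSet_iff ⟨_, hx₁F⟩ ⟨_, hy₁G⟩).1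
    (hT _ _ (isFace_maxFace P α) (isFace_maxFace P β) ⟨_, hx₁F⟩ ⟨_, hy₁G⟩ (inFphi_maxFace f hf0))
  have hdG := vsub_mem_vectorSpan ℝ hy₁G hy₂G
  rw [vsub_eq_sub, sub_sub_sub_cancel_left] at hdG
  exact sub_eq_zero.1 (Submodule.disjoint_def.1 hdisj _ (vsub_mem_vectorSpan ℝ hx₂F hx₁F) hdG)

theorem exists_isBotOf {Q : Set (Vec n)} (hQ : IsCompact Q) (hne : Q.Nonempty) (v : Vec n) :
    ∃ x, IsBotOf Q v x := by
  obtain ⟨x, hx, hmin⟩ := hQ.exists_isMinOn hne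
    (continuous_const.dotProduct continuous_id : Continuous (dot v)).continuousOn
  exact ⟨x, hx, fun y hy => hmin hy⟩

theorem IsPolytope.isCompact_inter_reflP (hP : IsPolytope P) (z : Vec n) :
    IsCompact (P ∩ reflP z P) :=
  hP.isCompact.inter_right (hP.isCompact.image (by fun_prop)).isClosed

end Backward

/-- A polytope `(P, v)` is quasi-positively oriented (for every `z ∈ P` the
polytope `P ∩ ρ_z P` admits a unique minimizer and a unique maximizer of `⟨-, v⟩`) if and only
if the coherent subdivision `π(F^φ)` is tight (`dim F + dim G = dim (F+G)/2` for every
`(F, G) ∈ F^φ`). -/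
theorem stmt5 {n : ℕ} (P : Set (Vec n)) (v : Vec n) (hP : IsPolytope P) :
    QuasiPosOriented P v ↔ TightSub P v := by
  refine ⟨fun hQPO F G hF hG hFne hGne hIn => ?_, fun hT z hz => ?_⟩
  · rw [sdim_add_sdim_eq_sdim_avgSet_iff hFne hGne]
    exact disjoint_vectorSpan_of_inFphi hP.convex
      (fun z hz => quasiOriented_inter_reflP_iff.1 (hQPO z hz)) hF hG hFne hGne hIn
  · rw [quasiOriented_inter_reflP_iff]
    obtain ⟨x, hx⟩ := exists_isBotOf (hP.isCompact_inter_reflP z)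
      ⟨z, hz, mem_reflP.2 (by rwa [two_smul, add_sub_cancel_right])⟩ v
    exact ⟨x, hx, fun y hy => hx.eq_of_tightSub hP hT hy⟩
end
end

section
/- Let P ⊆ ℝⁿ be a polytope oriented by v ∈ ℝⁿ. If (F,G) ∈ F^φ, then top(F) ≤ bot(G) in the partial order induced by v on the vertices of P. -/
open scoped BigOperators

noncomputable section

/-- The covering relation of the partial order induced by `v` on the vertices of `P`:
`x ≤ y` whenever `[x, y]` is an edge of `P` with `⟨y - x, v⟩ > 0`. -/
def edgeCover {n : ℕ} (P : Set (Vec n)) (v : Vec n) (x y : Vec n) : Prop :=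
  IsEdge P (segment ℝ x y) ∧ 0 < dot (y - x) v


/-!
Write `P = conv V`. Since `(F, G) ∈ F^φ`, no pair `(q, p) ∈ P × P` with `q + p = top F + bot G`
has `⟨p, v⟩ > ⟨bot G, v⟩`; by Farkas' lemma there are `c` and `κ > 0` such that `top F`
maximizes `⟨c, -⟩` and `bot G` maximizes `⟨c + κ v, -⟩` on `P`. As `t` runs from `0` to `κ`, the
maximizers of `⟨c + t v, -⟩` move along edges of `P` on which `⟨-, v⟩` increases (the
shadow-vertex path). It arrives at the `v`-minimal vertex of the face maximizing `⟨c + κ v, -⟩`,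
which is unique because `v` is perpendicular to no edge, and from `bot G` a walk down edges
inside that face reaches this vertex.
-/

lemma Finset.sum_insert_update_smul {E ι : Type*} [AddCommMonoid E] [Module ℝ E] [DecidableEq ι]
    {s : Finset ι} {j : ι} (hj : j ∉ s) (l : ι → ℝ) (μ : ℝ) (y : ι → E) :
    ∑ i ∈ insert j s, Function.update l j μ i • y i = μ • y j + ∑ i ∈ s, l i • y i := by
  rw [Finset.sum_insert hj, Function.update_self]
  congr 1
  exact Finset.sum_congr rfl fun i hi => by rw [Function.update_of_ne (ne_of_mem_of_not_mem hi hj)]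

theorem farkas_alternative {E ι : Type*} [AddCommGroup E] [Module ℝ E] (s : Finset ι)
    (y : ι → E) (z : E) :
    (∃ l : ι → ℝ, (∀ i ∈ s, 0 ≤ l i) ∧ ∑ i ∈ s, l i • y i = z) ∨
      ∃ f : Module.Dual ℝ E, (∀ i ∈ s, f (y i) ≤ 0) ∧ 0 < f z := by
  classical
  induction s using Finset.induction_on generalizing y z with
  | empty =>
    by_cases hz : z = 0
    · exact .inl ⟨0, by simp, by simp [hz]⟩
    obtain ⟨f, hf⟩ : ∃ f : Module.Dual ℝ E, f z ≠ 0 := by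
      by_contra! h
      exact hz ((Module.forall_dual_apply_eq_zero_iff ℝ z).1 h)
    rcases hf.lt_or_gt with hf | hf
    · exact .inr ⟨-f, by simp, by simpa using hf⟩
    · exact .inr ⟨f, by simp, hf⟩
  | insert j s hj ih =>
    have update_nonneg {l : ι → ℝ} {μ : ℝ} (hl : ∀ i ∈ s, 0 ≤ l i) (hμ : 0 ≤ μ) :
        ∀ i ∈ insert j s, 0 ≤ Function.update l j μ i := by
      intro i hi
      rcases eq_or_ne i j with rfl | hij
      · simpa using hμ
      · simpa [hij] using hl i ((Finset.mem_insert.1 hi).resolve_left hij)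
    obtain ⟨l, hl, hz⟩ | ⟨f, hf, hfz⟩ := ih y z
    · exact .inl ⟨Function.update l j 0, update_nonneg hl le_rfl,
        by rw [Finset.sum_insert_update_smul hj, hz, zero_smul, zero_add]⟩
    by_cases hfj : f (y j) ≤ 0
    · exact .inr ⟨f, Finset.forall_mem_insert _ _ _ |>.2 ⟨hfj, hf⟩, hfz⟩
    push Not at hfj
    -- project along `y j` onto `ker f` and use the induction hypothesis there
    set T : E →ₗ[ℝ] E := LinearMap.id - ((f (y j))⁻¹ • f).smulRight (y j) with hT
    have hT_apply (x : E) : T x = x - ((f (y j))⁻¹ * f x) • y j := by simp [hT]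
    obtain ⟨l, hl, hTz⟩ | ⟨g, hg, hgz⟩ := ih (T ∘ y) (T z)
    · have hw : z - ∑ i ∈ s, l i • y i = ((f (y j))⁻¹ * f (z - ∑ i ∈ s, l i • y i)) • y j := by
        refine sub_eq_zero.1 ((hT_apply _).symm.trans ?_)
        simp only [map_sub, map_sum, map_smul, ← hTz, Function.comp_apply, sub_self]
      have hμ : 0 ≤ (f (y j))⁻¹ * f (z - ∑ i ∈ s, l i • y i) := by
        have : f (∑ i ∈ s, l i • y i) ≤ 0 := by
          rw [map_sum]
          exact Finset.sum_nonpos fun i hi => by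
            rw [map_smul, smul_eq_mul]; exact mul_nonpos_of_nonneg_of_nonpos (hl i hi) (hf i hi)
        rw [map_sub]
        exact mul_nonneg (inv_nonneg.2 hfj.le) (by linarith)
      exact .inl ⟨Function.update l j _, update_nonneg hl hμ,
        by rw [Finset.sum_insert_update_smul hj, ← hw, sub_add_cancel]⟩
    · refine .inr ⟨g ∘ₗ T, Finset.forall_mem_insert _ _ _ |>.2 ⟨?_, hg⟩, hgz⟩
      simp [hT_apply, hfj.ne']

section Faces

variable {ι : Type*} [Fintype ι] {V B C : Finset (ι → ℝ)} {a s w : ι → ℝ}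

open Classical in
def maximizers (V : Finset (ι → ℝ)) (w : ι → ℝ) : Finset (ι → ℝ) :=
  {s ∈ V | ∀ y ∈ V, w ⬝ᵥ y ≤ w ⬝ᵥ s}

@[simp]
lemma mem_maximizers : s ∈ maximizers V w ↔ s ∈ V ∧ ∀ y ∈ V, w ⬝ᵥ y ≤ w ⬝ᵥ s := by
  classical
  simp [maximizers]

lemma maximizers_subset : maximizers V w ⊆ V := fun _ hs => (mem_maximizers.1 hs).1

lemma mem_maximizers_iff_of_mem (ha : a ∈ maximizers V w) (hs : s ∈ V) :
    s ∈ maximizers V w ↔ w ⬝ᵥ s = w ⬝ᵥ a := by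
  rw [mem_maximizers] at ha ⊢
  exact ⟨fun h => le_antisymm (ha.2 s hs) (h.2 a ha.1),
    fun h => ⟨hs, fun y hy => h ▸ ha.2 y hy⟩⟩

/-- The faces of `convexHull ℝ V`, represented by the points of `V` they contain. -/
def IsFaceOf (V B : Finset (ι → ℝ)) : Prop := ∃ w, maximizers V w = B

lemma isFaceOf_maximizers (V : Finset (ι → ℝ)) (w : ι → ℝ) : IsFaceOf V (maximizers V w) :=
  ⟨w, rfl⟩

lemma IsFaceOf.subset (h : IsFaceOf V B) : B ⊆ V := by
  obtain ⟨w, rfl⟩ := h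
  exact maximizers_subset

/-- The face is cut out by `w + ε • u` for any `ε > 0` small enough to keep every strict
inequality of `w` on the finite set `V`. -/
lemma maximizers_maximizers (V : Finset (ι → ℝ)) (w u : ι → ℝ) :
    IsFaceOf V (maximizers (maximizers V w) u) := by
  have hsmall : ∀ᶠ ε in nhdsWithin (0 : ℝ) (Set.Ioi 0), 0 < ε ∧
      ∀ s ∈ V, ∀ y ∈ V, w ⬝ᵥ s < w ⬝ᵥ y → (w + ε • u) ⬝ᵥ s < (w + ε • u) ⬝ᵥ y := by
    refine eventually_mem_nhdsWithin.and ?_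
    refine nhdsWithin_le_nhds ((Filter.eventually_all_finset V).2 fun s _ =>
      (Filter.eventually_all_finset V).2 fun y _ => ?_)
    by_cases hsy : w ⬝ᵥ s < w ⬝ᵥ y
    · have hcont : Continuous fun ε : ℝ => (w + ε • u) ⬝ᵥ y - (w + ε • u) ⬝ᵥ s := by
        simp only [add_dotProduct, smul_dotProduct, smul_eq_mul]
        fun_prop
      filter_upwards [(continuousAt_const (y := (0 : ℝ))).eventually_lt hcont.continuousAt
        (by simpa using hsy)]
        with ε hε _ using by linarith
    · exact .of_forall fun _ h => absurd h hsy
  obtain ⟨ε, hε, hgap⟩ := hsmall.exists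
  refine ⟨w + ε • u, Finset.ext fun s => ?_⟩
  simp only [mem_maximizers, add_dotProduct, smul_dotProduct, smul_eq_mul] at hgap ⊢
  constructor
  · rintro ⟨hs, hmax⟩
    have hsw : ∀ y ∈ V, w ⬝ᵥ y ≤ w ⬝ᵥ s := fun y hy =>
      not_lt.1 fun h => (hgap s hs y hy h).not_ge (hmax y hy)
    refine ⟨⟨hs, hsw⟩, fun y ⟨hy, hyw⟩ => ?_⟩
    have := hmax y hy
    have := le_antisymm (hsw y hy) (hyw s hs)
    nlinarith
  · rintro ⟨⟨hs, hsw⟩, hsu⟩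
    refine ⟨hs, fun y hy => ?_⟩
    rcases (hsw y hy).lt_or_eq with h | h
    · exact (hgap y hy s hs h).le
    · have := hsu y ⟨hy, fun z hz => h ▸ hsw z hz⟩
      nlinarith

lemma IsFaceOf.trans (hB : IsFaceOf V B) (hC : IsFaceOf B C) : IsFaceOf V C := by
  obtain ⟨w, rfl⟩ := hB
  obtain ⟨u, rfl⟩ := hC
  exact maximizers_maximizers V w u

lemma IsFaceOf.exists_lt_of_ne (h : IsFaceOf V {a}) :
    ∃ w, ∀ s ∈ V, s ≠ a → w ⬝ᵥ s < w ⬝ᵥ a := by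
  obtain ⟨w, hw⟩ := h
  have ha : a ∈ maximizers V w := hw ▸ Finset.mem_singleton_self a
  refine ⟨w, fun s hs hsa => lt_of_not_ge fun hle => hsa ?_⟩
  rw [← Finset.mem_singleton, ← hw]
  exact mem_maximizers.2 ⟨hs, fun y hy => (mem_maximizers.1 ha).2 y hy |>.trans hle⟩

lemma IsFaceOf.singleton_of_subset (h : IsFaceOf V {a}) (ha : a ∈ B) (hBV : B ⊆ V) :
    IsFaceOf B {a} := by
  obtain ⟨w, hw⟩ := h.exists_lt_of_ne
  refine ⟨w, Finset.eq_singleton_iff_unique_mem.2 ⟨mem_maximizers.2 ⟨ha, fun y hy => ?_⟩,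
    fun s hs => ?_⟩⟩
  · rcases eq_or_ne y a with rfl | hya
    · exact le_rfl
    · exact (hw y (hBV hy) hya).le
  · by_contra hsa
    exact (hw s (hBV (maximizers_subset hs)) hsa).not_ge ((mem_maximizers.1 hs).2 a ha)

end Faces

section ConvexHull

variable {ι : Type*} [Fintype ι] {V : Finset (ι → ℝ)} {w x : ι → ℝ}

lemma dotProduct_le_of_mem_convexHull {M : ℝ} (hM : ∀ s ∈ V, w ⬝ᵥ s ≤ M)
    (hx : x ∈ convexHull ℝ (V : Set (ι → ℝ))) : w ⬝ᵥ x ≤ M :=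
  convexHull_min hM (convex_halfSpace_le ⟨dotProduct_add w, fun c y => dotProduct_smul c w y⟩ M) hx

lemma convexHull_maximizers (V : Finset (ι → ℝ)) (w : ι → ℝ) :
    convexHull ℝ (maximizers V w : Set (ι → ℝ)) = {x ∈ convexHull ℝ (V : Set (ι → ℝ)) |
      ∀ y ∈ convexHull ℝ (V : Set (ι → ℝ)), w ⬝ᵥ y ≤ w ⬝ᵥ x} := by
  ext x
  constructor
  · intro hx
    obtain ⟨m, hm⟩ : (maximizers V w).Nonempty := by
      by_contra! h
      simp [h] at hx
    have hmV := (mem_maximizers.1 hm).2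
    have hmx : w ⬝ᵥ m ≤ w ⬝ᵥ x := convexHull_min
      (fun s hs => ((mem_maximizers_iff_of_mem hm (maximizers_subset hs)).1 hs).ge)
      (convex_halfSpace_ge ⟨dotProduct_add w, fun c y => dotProduct_smul c w y⟩ _) hx
    exact ⟨convexHull_mono (Finset.coe_subset.2 maximizers_subset) hx,
      fun y hy => (dotProduct_le_of_mem_convexHull hmV hy).trans hmx⟩
  · rintro ⟨hx, hmax⟩
    obtain ⟨l, hl₀, hl₁, rfl⟩ := Finset.mem_convexHull'.1 hx
    set M := w ⬝ᵥ ∑ y ∈ V, l y • y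
    have hle : ∀ y ∈ V, w ⬝ᵥ y ≤ M := fun y hy => hmax y (subset_convexHull ℝ _ hy)
    -- the weights average `M - w ⬝ᵥ y ≥ 0` to zero, so they vanish off the maximizers
    have hsum : ∑ y ∈ V, l y * (M - w ⬝ᵥ y) = 0 := by
      simp only [mul_sub, Finset.sum_sub_distrib, ← Finset.sum_mul, hl₁, one_mul, M,
        dotProduct_sum, dotProduct_smul, smul_eq_mul, sub_self]
    have hzero : ∀ y ∈ V, y ∉ maximizers V w → l y = 0 := fun y hy hyn => by
      have := (Finset.sum_eq_zero_iff_of_nonneg fun z hz =>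
        mul_nonneg (hl₀ z hz) (sub_nonneg.2 (hle z hz))).1 hsum y hy
      refine (mul_eq_zero.1 this).resolve_right fun h => hyn (mem_maximizers.2 ⟨hy, fun z hz => ?_⟩)
      linarith [hle z hz]
    refine Finset.mem_convexHull'.2 ⟨l, fun y hy => hl₀ y (maximizers_subset hy), ?_, ?_⟩
    · rw [← hl₁]
      exact Finset.sum_subset maximizers_subset hzero
    · exact Finset.sum_subset maximizers_subset fun y hy hyn => by rw [hzero y hy hyn, zero_smul]

lemma add_sum_smul_sub_mem_convexHull {a : ι → ℝ} {l : (ι → ℝ) → ℝ} (ha : a ∈ V)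
    (hl₀ : ∀ y ∈ V, 0 ≤ l y) (hl₁ : ∑ y ∈ V, l y ≤ 1) :
    a + ∑ y ∈ V, l y • (y - a) ∈ convexHull ℝ (V : Set (ι → ℝ)) := by
  classical
  have hcomb : a + ∑ y ∈ V, l y • (y - a) =
      ∑ y ∈ V, (l y + if y = a then 1 - ∑ z ∈ V, l z else 0) • y := by
    simp only [add_smul, Finset.sum_add_distrib, ite_smul, zero_smul, Finset.sum_ite_eq', ha,
      if_true, smul_sub, Finset.sum_sub_distrib, ← Finset.sum_smul, sub_smul, one_smul]
    abel
  rw [hcomb]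
  refine (convex_convexHull ℝ _).sum_mem (fun y hy => ?_) ?_ fun y hy => subset_convexHull ℝ _ hy
  · split_ifs <;> linarith [hl₀ y hy]
  · rw [Finset.sum_add_distrib, Finset.sum_ite_eq', if_pos ha]
    ring

end ConvexHull

section Edges

variable {ι : Type*} [Fintype ι] {V B C : Finset (ι → ℝ)} {a b s w u p : ι → ℝ}

lemma dotProduct_self_nonneg (x : ι → ℝ) : 0 ≤ x ⬝ᵥ x := by
  simpa using dotProduct_star_self_nonneg x

lemma dotProduct_self_pos {x : ι → ℝ} (hx : x ≠ 0) : 0 < x ⬝ᵥ x :=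
  (dotProduct_self_nonneg x).lt_of_ne' (dotProduct_self_eq_zero.not.2 hx)

lemma dotProduct_le_dotProduct_self {p q : ι → ℝ} (hq : q ⬝ᵥ q ≤ p ⬝ᵥ p) :
    p ⬝ᵥ q ≤ p ⬝ᵥ p ∧ (p ⬝ᵥ q = p ⬝ᵥ p → q = p) := by
  have hexp : (p - q) ⬝ᵥ (p - q) = p ⬝ᵥ p - 2 * p ⬝ᵥ q + q ⬝ᵥ q := by
    simp only [sub_dotProduct, dotProduct_sub, dotProduct_comm q p]
    ring
  have hsq := dotProduct_self_nonneg (p - q)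
  refine ⟨by linarith, fun h => (sub_eq_zero.1 (dotProduct_self_eq_zero.1 ?_)).symm⟩
  linarith

/-- The first time `t ≥ 0` at which a point of larger `u`-value ties with `a` for the maximum
of `w + t • u`; it comes no later than the time at which `s` ties with `a`. -/
lemma exists_maximizers_add_smul (ha : a ∈ maximizers B w) (hs : s ∈ B)
    (hlt : u ⬝ᵥ a < u ⬝ᵥ s) :
    ∃ t, 0 ≤ t ∧ t * (u ⬝ᵥ s - u ⬝ᵥ a) ≤ w ⬝ᵥ a - w ⬝ᵥ s ∧ a ∈ maximizers B (w + t • u) ∧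
      ∃ s' ∈ maximizers B (w + t • u), u ⬝ᵥ a < u ⬝ᵥ s' := by
  classical
  set r : (ι → ℝ) → ℝ := fun y => (w ⬝ᵥ a - w ⬝ᵥ y) / (u ⬝ᵥ y - u ⬝ᵥ a)
  obtain ⟨s₀, hs₀, hmin⟩ := {y ∈ B | u ⬝ᵥ a < u ⬝ᵥ y}.exists_min_image r
    ⟨s, Finset.mem_filter.2 ⟨hs, hlt⟩⟩
  rw [Finset.mem_filter] at hs₀
  have hwa := (mem_maximizers.1 ha).2
  have hr : ∀ y ∈ B, u ⬝ᵥ a < u ⬝ᵥ y → r s₀ * (u ⬝ᵥ y - u ⬝ᵥ a) ≤ w ⬝ᵥ a - w ⬝ᵥ y :=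
    fun y hy h => (le_div_iff₀ (sub_pos.2 h)).1 (hmin y (Finset.mem_filter.2 ⟨hy, h⟩))
  have hr₀ : 0 ≤ r s₀ := div_nonneg (sub_nonneg.2 (hwa s₀ hs₀.1)) (sub_pos.2 hs₀.2).le
  have hamax : a ∈ maximizers B (w + r s₀ • u) := by
    refine mem_maximizers.2 ⟨(mem_maximizers.1 ha).1, fun y hy => ?_⟩
    simp only [add_dotProduct, smul_dotProduct, smul_eq_mul]
    by_cases h : u ⬝ᵥ a < u ⬝ᵥ y
    · nlinarith [hr y hy h]
    · nlinarith [hwa y hy]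
  refine ⟨r s₀, hr₀, hr s hs hlt, hamax, s₀, (mem_maximizers_iff_of_mem hamax hs₀.1).2 ?_, hs₀.2⟩
  have : r s₀ * (u ⬝ᵥ s₀ - u ⬝ᵥ a) = w ⬝ᵥ a - w ⬝ᵥ s₀ := div_mul_cancel₀ _ (sub_pos.2 hs₀.2).ne'
  simp only [add_dotProduct, smul_dotProduct, smul_eq_mul]
  linarith

/-- At a vertex `a`, exposed by `w`, rescale every other point `y` to `q y` on the hyperplane
`w ⬝ᵥ (q y) = -1`; the `q y` farthest from the origin spans an extremal ray, and
`(p ⬝ᵥ p) • w + p` exposes the face of the points on that ray. -/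
lemma exists_maximizers_subset_ray (hw : ∀ y ∈ B, y ≠ a → w ⬝ᵥ y < w ⬝ᵥ a) (ha : a ∈ B)
    (hs : s ∈ B) (hsa : s ≠ a) :
    ∃ W p, a ∈ maximizers B W ∧ (∃ s ∈ maximizers B W, s ≠ a) ∧
      ∀ y ∈ maximizers B W, ∃ μ : ℝ, 0 ≤ μ ∧ y = a + μ • p := by
  classical
  set lam : (ι → ℝ) → ℝ := fun y => w ⬝ᵥ a - w ⬝ᵥ y
  set q : (ι → ℝ) → ι → ℝ := fun y => (lam y)⁻¹ • (y - a)
  have hlam : ∀ y ∈ B, y ≠ a → 0 < lam y := fun y hy hya => sub_pos.2 (hw y hy hya)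
  have hq : ∀ y ∈ B, y ≠ a → y - a = lam y • q y := fun y hy hya => by
    simp only [q, smul_smul, mul_inv_cancel₀ (hlam y hy hya).ne', one_smul]
  have hwq : ∀ y ∈ B, y ≠ a → w ⬝ᵥ q y = -1 := fun y hy hya => by
    simp only [q, dotProduct_smul, dotProduct_sub, smul_eq_mul]
    field_simp [(hlam y hy hya).ne']
    simp [lam]
  obtain ⟨s₀, hs₀, hfar⟩ :=
    (B.erase a).exists_max_image (fun y => q y ⬝ᵥ q y) ⟨s, by simp [hs, hsa]⟩
  rw [Finset.mem_erase] at hs₀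
  set p := q s₀
  set N := p ⬝ᵥ p
  have hW : ∀ y ∈ B, y ≠ a → (N • w + p) ⬝ᵥ y - (N • w + p) ⬝ᵥ a = lam y * (p ⬝ᵥ q y - N) :=
    fun y hy hya => by
      rw [← dotProduct_sub, hq y hy hya, dotProduct_smul, add_dotProduct, smul_dotProduct,
        hwq y hy hya, smul_eq_mul, smul_eq_mul]
      ring
  have hpq : ∀ y ∈ B, y ≠ a → p ⬝ᵥ q y ≤ N ∧ (p ⬝ᵥ q y = N → q y = p) := fun y hy hya =>
    dotProduct_le_dotProduct_self (hfar y (by simp [hy, hya]))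
  have hamax : a ∈ maximizers B (N • w + p) := by
    refine mem_maximizers.2 ⟨ha, fun y hy => ?_⟩
    rcases eq_or_ne y a with rfl | hya
    · exact le_rfl
    · have := hW y hy hya
      nlinarith [hlam y hy hya, (hpq y hy hya).1]
  refine ⟨N • w + p, p, hamax, ⟨s₀, (mem_maximizers_iff_of_mem hamax hs₀.2).2 ?_, hs₀.1⟩,
    fun y hy => ?_⟩
  · linarith [hW s₀ hs₀.2 hs₀.1]
  rcases eq_or_ne y a with rfl | hya
  · exact ⟨0, le_rfl, by simp⟩
  have hyB := maximizers_subset hy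
  have htie := (mem_maximizers_iff_of_mem hamax hyB).1 hy
  have hqy : q y = p := (hpq y hyB hya).2 <| by
    have := hW y hyB hya
    rw [htie, sub_self, zero_eq_mul] at this
    exact sub_eq_zero.1 (this.resolve_left (hlam y hyB hya).ne')
  exact ⟨lam y, (hlam y hyB hya).le, by rw [← hqy, ← hq y hyB hya, add_sub_cancel]⟩

lemma exists_segment_of_subset_ray (hC : ∀ y ∈ C, ∃ μ : ℝ, 0 ≤ μ ∧ y = a + μ • p)
    (ha : a ∈ C) (hs : s ∈ C) (hsa : s ≠ a) :
    ∃ m, IsFaceOf C {m} ∧ m ≠ a ∧ convexHull ℝ (C : Set (ι → ℝ)) = segment ℝ a m := by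
  have hval (μ : ℝ) : p ⬝ᵥ (a + μ • p) = p ⬝ᵥ a + μ * p ⬝ᵥ p := by
    rw [dotProduct_add, dotProduct_smul, smul_eq_mul]
  obtain ⟨μs, hμs, rfl⟩ := hC s hs
  have hμs' : 0 < μs := hμs.lt_of_ne' fun h => hsa (by simp [h])
  have hp0 : p ≠ 0 := fun h => hsa (by simp [h])
  have hp : 0 < p ⬝ᵥ p := dotProduct_self_pos hp0
  obtain ⟨m, hm, hmax⟩ := C.exists_max_image (p ⬝ᵥ ·) ⟨a, ha⟩
  obtain ⟨μm, -, rfl⟩ := hC m hm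
  have hle : ∀ μ, a + μ • p ∈ C → μ ≤ μm := fun μ h => by
    have := hmax _ h
    rw [hval, hval] at this
    nlinarith
  have hμm : 0 < μm := hμs'.trans_le (hle μs hs)
  refine ⟨a + μm • p, ⟨p, Finset.eq_singleton_iff_unique_mem.2 ⟨mem_maximizers.2 ⟨hm, hmax⟩,
    fun y hy => ?_⟩⟩, fun h => hμm.ne' (by simpa [hp0] using h), ?_⟩
  · obtain ⟨μ, -, rfl⟩ := hC y (maximizers_subset hy)
    have := (mem_maximizers.1 hy).2 _ hm
    rw [le_antisymm (hle μ (maximizers_subset hy)) (by rw [hval, hval] at this; nlinarith)]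
  refine (convexHull_min (fun y hy => ?_) (convex_segment _ _)).antisymm ?_
  · obtain ⟨μ, hμ, rfl⟩ := hC y hy
    rw [segment_eq_image']
    refine ⟨μ / μm, ⟨div_nonneg hμ hμm.le, (div_le_one hμm).2 (hle μ hy)⟩, ?_⟩
    simp only [add_sub_cancel_left, smul_smul, div_mul_cancel₀ _ hμm.ne']
  · rw [← convexHull_pair]
    exact convexHull_mono (Set.insert_subset ha (Set.singleton_subset_iff.2 hm))

def IsEdgeOf (B : Finset (ι → ℝ)) (a b : ι → ℝ) : Prop :=
  ∃ C, IsFaceOf B C ∧ convexHull ℝ (C : Set (ι → ℝ)) = segment ℝ a b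

lemma IsFaceOf.isEdgeOf (hB : IsFaceOf V B) (h : IsEdgeOf B a b) : IsEdgeOf V a b := by
  obtain ⟨C, hC, hseg⟩ := h
  exact ⟨C, hB.trans hC, hseg⟩

lemma exists_edge_of_ne (hw : ∀ y ∈ B, y ≠ a → w ⬝ᵥ y < w ⬝ᵥ a) (ha : a ∈ B) (hs : s ∈ B)
    (hsa : s ≠ a) : ∃ a', IsFaceOf B {a'} ∧ a' ≠ a ∧ IsEdgeOf B a a' := by
  obtain ⟨W, p, haW, ⟨s', hs', hs'a⟩, hray⟩ := exists_maximizers_subset_ray hw ha hs hsa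
  obtain ⟨m, hm, hma, hseg⟩ := exists_segment_of_subset_ray hray haW hs' hs'a
  exact ⟨m, (isFaceOf_maximizers B W).trans hm, hma, _, isFaceOf_maximizers B W, hseg⟩

lemma exists_edge_lt (ha : IsFaceOf B {a}) (hs : s ∈ B) (hlt : u ⬝ᵥ a < u ⬝ᵥ s) :
    ∃ a', IsFaceOf B {a'} ∧ u ⬝ᵥ a < u ⬝ᵥ a' ∧ IsEdgeOf B a a' := by
  obtain ⟨w, hw⟩ := ha.exists_lt_of_ne
  have haB : a ∈ B := ha.subset (Finset.mem_singleton_self a)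
  have haw : a ∈ maximizers B w := mem_maximizers.2 ⟨haB, fun y hy => by
    rcases eq_or_ne y a with rfl | hya
    exacts [le_rfl, (hw y hy hya).le]⟩
  obtain ⟨t, ht, -, hat, s', hs', hs'u⟩ := exists_maximizers_add_smul haw hs hlt
  set A := maximizers B (w + t • u)
  have hA : A ⊆ B := maximizers_subset
  have hup : ∀ y ∈ A, y ≠ a → u ⬝ᵥ a < u ⬝ᵥ y := fun y hy hya => by
    have htie := (mem_maximizers_iff_of_mem hat (hA hy)).1 hy
    simp only [add_dotProduct, smul_dotProduct, smul_eq_mul] at htie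
    nlinarith [hw y (hA hy) hya]
  obtain ⟨a', ha', ha'a, hedge⟩ := exists_edge_of_ne (fun y hy => hw y (hA hy)) hat hs'
    (fun h => hs'u.ne (h ▸ rfl))
  exact ⟨a', (isFaceOf_maximizers B _).trans ha',
    hup a' (ha'.subset (Finset.mem_singleton_self a')) ha'a,
    (isFaceOf_maximizers B _).isEdgeOf hedge⟩

end Edges


open Finset in
lemma Finset.card_filter_lt_lt_of_mem {α β : Type*} [LinearOrder β] {B : Finset α} {f : α → β}
    {x y : α} (hy : y ∈ B) (hyx : f y < f x) :
    #{s ∈ B | f s < f y} < #{s ∈ B | f s < f x} := by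
  refine Finset.card_lt_card ⟨fun s hs => ?_, fun h => ?_⟩
  · rw [Finset.mem_filter] at hs ⊢
    exact ⟨hs.1, hs.2.trans hyx⟩
  · exact lt_irrefl _ (Finset.mem_filter.1 (h (Finset.mem_filter.2 ⟨hy, hyx⟩))).2

section Polytope

variable {n : ℕ} {V B : Finset (Vec n)} {a b x v : Vec n}

lemma sdim_segment (h : a ≠ b) : sdim (segment ℝ a b) = 1 := by
  rw [sdim, ← convexHull_pair, affineSpan_convexHull, direction_affineSpan, vectorSpan_pair]
  exact finrank_span_singleton (vsub_ne_zero.2 h)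

lemma isFaceOf_singleton_of_isFace (h : IsFace (convexHull ℝ (V : Set (Vec n))) {a}) :
    IsFaceOf V {a} := by
  obtain ⟨c, hc⟩ := h
  have hc' : {a} = convexHull ℝ (maximizers V c : Set (Vec n)) :=
    hc.trans (convexHull_maximizers V c).symm
  have hsub : (maximizers V c : Set (Vec n)) ⊆ {a} := hc' ▸ subset_convexHull ℝ _
  have hne : (maximizers V c).Nonempty := by
    rw [← Finset.coe_nonempty, ← convexHull_nonempty_iff (𝕜 := ℝ), ← hc']
    exact Set.singleton_nonempty a
  exact ⟨c, (Finset.Nonempty.subset_singleton_iff hne).1 (Finset.coe_subset_singleton.1 hsub)⟩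

lemma IsEdgeOf.isEdge (h : IsEdgeOf V a b) (hab : a ≠ b) :
    IsEdge (convexHull ℝ (V : Set (Vec n))) (segment ℝ a b) := by
  obtain ⟨C, ⟨w, rfl⟩, hseg⟩ := h
  exact ⟨⟨w, hseg.symm.trans (convexHull_maximizers V w)⟩, sdim_segment hab⟩

lemma IsEdgeOf.symm (h : IsEdgeOf V a b) : IsEdgeOf V b a := by
  obtain ⟨C, hC, hseg⟩ := h
  exact ⟨C, hC, hseg.trans (segment_symm ℝ a b)⟩

lemma IsEdgeOf.edgeCover (h : IsEdgeOf V a b) (hlt : v ⬝ᵥ a < v ⬝ᵥ b) :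
    edgeCover (convexHull ℝ (V : Set (Vec n))) v a b := by
  refine ⟨h.isEdge fun hab => hlt.ne (hab ▸ rfl), ?_⟩
  change 0 < (b - a) ⬝ᵥ v
  rw [sub_dotProduct, dotProduct_comm b, dotProduct_comm a]
  linarith

lemma Oriented.dotProduct_ne (hor : Oriented (convexHull ℝ (V : Set (Vec n))) v)
    (h : IsEdgeOf V a b) (hab : a ≠ b) : v ⬝ᵥ a ≠ v ⬝ᵥ b := by
  have hd : b - a ∈ (affineSpan ℝ (segment ℝ a b)).direction := by
    rw [← vsub_eq_sub]
    exact AffineSubspace.vsub_mem_direction (subset_affineSpan ℝ _ (right_mem_segment ℝ a b))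
      (subset_affineSpan ℝ _ (left_mem_segment ℝ a b))
  intro heq
  refine hor _ (h.isEdge hab) _ hd (sub_ne_zero.2 hab.symm) ?_
  change (b - a) ⬝ᵥ v = 0
  rw [sub_dotProduct, dotProduct_comm b, dotProduct_comm a, heq, sub_self]

/-- Two minimizers of `v` on a face would span an edge perpendicular to `v`. -/
lemma Oriented.eq_of_forall_le (hor : Oriented (convexHull ℝ (V : Set (Vec n))) v)
    (hB : IsFaceOf V B) (hx : IsFaceOf V {x}) (hxB : x ∈ B) (haB : a ∈ B)
    (hxmin : ∀ s ∈ B, v ⬝ᵥ x ≤ v ⬝ᵥ s) (hamin : ∀ s ∈ B, v ⬝ᵥ a ≤ v ⬝ᵥ s) : x = a := by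
  by_contra hxa
  have hmin : ∀ y ∈ B, (∀ s ∈ B, v ⬝ᵥ y ≤ v ⬝ᵥ s) → y ∈ maximizers B (-v) := fun y hy hy' =>
    mem_maximizers.2 ⟨hy, fun s hs => by simpa using hy' s hs⟩
  obtain ⟨w, hw⟩ := hx.exists_lt_of_ne
  obtain ⟨a', ha', ha'x, hedge⟩ := exists_edge_of_ne
    (fun y hy => hw y (hB.subset (maximizers_subset hy))) (hmin x hxB hxmin) (hmin a haB hamin)
    (Ne.symm hxa)
  refine hor.dotProduct_ne ((hB.trans (isFaceOf_maximizers B (-v))).isEdgeOf hedge) ha'x.symm ?_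
  have := (mem_maximizers_iff_of_mem (hmin x hxB hxmin) (maximizers_subset
    (ha'.subset (Finset.mem_singleton_self a')))).1 (ha'.subset (Finset.mem_singleton_self a'))
  simpa using this.symm

end Polytope

section Walks

open Finset

variable {n : ℕ} {V B : Finset (Vec n)} {a b x v c : Vec n} {κ t : ℝ}

theorem reflTransGen_edgeCover_of_forall_le (hor : Oriented (convexHull ℝ (V : Set (Vec n))) v)
    (hB : IsFaceOf V B) (haB : a ∈ B) (hamin : ∀ s ∈ B, v ⬝ᵥ a ≤ v ⬝ᵥ s) (hx : IsFaceOf V {x})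
    (hxB : x ∈ B) : Relation.ReflTransGen (edgeCover (convexHull ℝ (V : Set (Vec n))) v) a x := by
  classical
  induction hN : #{s ∈ B | v ⬝ᵥ s < v ⬝ᵥ x} using Nat.strong_induction_on generalizing x with
  | _ N ih =>
  by_cases hlow : ∃ s ∈ B, v ⬝ᵥ s < v ⬝ᵥ x
  · obtain ⟨s, hs, hsx⟩ := hlow
    obtain ⟨x', hx', hlt, hedge⟩ :=
      exists_edge_lt (hx.singleton_of_subset hxB hB.subset) hs (u := -v) (by simpa using hsx)
    have hx'B := hx'.subset (mem_singleton_self x')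
    simp only [neg_dotProduct, neg_lt_neg_iff] at hlt
    exact (ih _ (hN ▸ card_filter_lt_lt_of_mem hx'B hlt) (hB.trans hx') hx'B rfl).tail
      ((hB.isEdgeOf hedge).symm.edgeCover hlt)
  · push Not at hlow
    rw [hor.eq_of_forall_le hB hx hxB haB hlow hamin]

/-- The shadow-vertex path: following the maximizers of `c + t • v` as `t` increases to `κ`
climbs in `v` along edges, and ends by descending inside the face cut out by `c + κ • v`. -/
theorem reflTransGen_edgeCover_of_mem_maximizers
    (hor : Oriented (convexHull ℝ (V : Set (Vec n))) v) (hb : IsFaceOf V {b})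
    (hbκ : b ∈ maximizers V (c + κ • v)) (ha : IsFaceOf V {a}) (htκ : t < κ)
    (hat : a ∈ maximizers V (c + t • v)) :
    Relation.ReflTransGen (edgeCover (convexHull ℝ (V : Set (Vec n))) v) a b := by
  classical
  induction hN : #{s ∈ V | (-v) ⬝ᵥ s < (-v) ⬝ᵥ a} using Nat.strong_induction_on
    generalizing a t with
  | _ N ih =>
  have haV := ha.subset (mem_singleton_self a)
  by_cases haκ : a ∈ maximizers V (c + κ • v)
  · refine reflTransGen_edgeCover_of_forall_le hor (isFaceOf_maximizers V _) haκ
      (fun s hs => ?_) hb hbκ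
    have h₁ := (mem_maximizers_iff_of_mem haκ (maximizers_subset hs)).1 hs
    have h₂ := (mem_maximizers.1 hat).2 s (maximizers_subset hs)
    simp only [add_dotProduct, smul_dotProduct, smul_eq_mul] at h₁ h₂
    nlinarith
  obtain ⟨s, hs, hsκ⟩ : ∃ s ∈ V, (c + κ • v) ⬝ᵥ a < (c + κ • v) ⬝ᵥ s := by
    simpa [mem_maximizers, haV] using haκ
  have hst := (mem_maximizers.1 hat).2 s hs
  simp only [add_dotProduct, smul_dotProduct, smul_eq_mul] at hsκ hst
  have hvs : v ⬝ᵥ a < v ⬝ᵥ s := by nlinarith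
  obtain ⟨t', ht', hts, hat', s', hs', hs'v⟩ := exists_maximizers_add_smul hat hs hvs
  rw [add_assoc, ← add_smul] at hat' hs'
  simp only [add_dotProduct, smul_dotProduct, smul_eq_mul] at hts
  have htκ' : t + t' < κ := by nlinarith
  obtain ⟨a', ha', hlt, hedge⟩ :=
    exists_edge_lt (ha.singleton_of_subset hat' maximizers_subset) hs' hs'v
  have ha'V := (isFaceOf_maximizers V _).trans ha'
  refine .head (((isFaceOf_maximizers V _).isEdgeOf hedge).edgeCover hlt)
    (ih _ ?_ ha'V htκ' (ha'.subset (mem_singleton_self a')) rfl)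
  exact hN ▸ card_filter_lt_lt_of_mem (ha'V.subset (mem_singleton_self a')) (by simpa using hlt)

end Walks

section LowerFaces

variable {n : ℕ} {V : Finset (Vec n)} {a b v : Vec n}

lemma InFphi.dotProduct_le {P F G : Set (Vec n)} (hFG : InFphi P v F G) {x y : Vec n}
    (hx : x ∈ F) (hy : y ∈ G) {q p : Vec n} (hq : q ∈ P) (hp : p ∈ P) (hqp : q + p = x + y) :
    v ⬝ᵥ p ≤ v ⬝ᵥ y := by
  by_contra! hlt
  refine hFG ⟨x, hx, y, hy, dot (x - y) v - dot (q - p) v, ?_, q, hq, p, hp, ?_⟩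
  · have := congrArg (v ⬝ᵥ ·) hqp
    simp only [dotProduct_add] at this
    change 0 < (x - y) ⬝ᵥ v - (q - p) ⬝ᵥ v
    simp only [dotProduct_comm _ v, dotProduct_sub]
    linarith
  · rw [sub_sub_cancel, hqp]

lemma exists_apply_eq_dotProduct_add (f : Module.Dual ℝ (Vec n × ℝ)) :
    ∃ c : Vec n, ∀ x r, f (x, r) = c ⬝ᵥ x + r * f (0, 1) := by
  refine ⟨(dotProductEquiv ℝ (Fin n)).symm (f ∘ₗ LinearMap.inl ℝ _ ℝ), fun x r => ?_⟩
  have : (x, r) = (x, 0) + r • ((0 : Vec n), (1 : ℝ)) := by simp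
  rw [this, map_add, map_smul, smul_eq_mul, ← dotProductEquiv_apply_apply ℝ,
    LinearEquiv.apply_symm_apply]
  rfl

/-- The certificate, scaled down so that both halves stay in `convexHull ℝ V`, moves `(a, b)`
within its fibre. -/
lemma exists_fiber_lt_of_sum_eq (ha : a ∈ V) (hb : b ∈ V) {l₁ l₂ : Vec n → ℝ}
    (hl₁ : ∀ x ∈ V, 0 ≤ l₁ x) (hl₂ : ∀ x ∈ V, 0 ≤ l₂ x)
    (hfst : ∑ x ∈ V, l₁ x • (x - a) + ∑ x ∈ V, l₂ x • (x - b) = 0)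
    (hsnd : ∑ x ∈ V, l₂ x * v ⬝ᵥ (x - b) = 1) :
    ∃ q ∈ convexHull ℝ (V : Set (Vec n)), ∃ p ∈ convexHull ℝ (V : Set (Vec n)),
      q + p = a + b ∧ v ⬝ᵥ b < v ⬝ᵥ p := by
  have hL : 0 ≤ ∑ x ∈ V, l₁ x := Finset.sum_nonneg hl₁
  have hM : 0 ≤ ∑ x ∈ V, l₂ x := Finset.sum_nonneg hl₂
  set θ := (∑ x ∈ V, l₁ x + ∑ x ∈ V, l₂ x + 1)⁻¹
  have hθ : 0 < θ := inv_pos.2 (by linarith)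
  have hθ₁ : θ * ∑ x ∈ V, l₁ x ≤ 1 := by rw [inv_mul_le_one₀ (by linarith)]; linarith
  have hθ₂ : θ * ∑ x ∈ V, l₂ x ≤ 1 := by rw [inv_mul_le_one₀ (by linarith)]; linarith
  refine ⟨_, add_sum_smul_sub_mem_convexHull ha (fun x hx => mul_nonneg hθ.le (hl₁ x hx))
      (by rwa [← Finset.mul_sum]),
    _, add_sum_smul_sub_mem_convexHull hb (fun x hx => mul_nonneg hθ.le (hl₂ x hx))
      (by rwa [← Finset.mul_sum]), ?_, ?_⟩
  · simp only [← smul_smul, ← Finset.smul_sum]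
    rw [add_add_add_comm, ← smul_add, hfst, smul_zero, add_zero]
  · simp only [← smul_smul, ← Finset.smul_sum, dotProduct_add, dotProduct_smul,
      dotProduct_sum, smul_eq_mul]
    rw [hsnd, mul_one]
    linarith

/-- Linear programming duality, by Farkas' lemma on the family `(x - a, 0)`,
`(x - b, v ⬝ᵥ (x - b))` and the target `(0, 1)`. -/
lemma exists_mem_maximizers_of_fiber (ha : a ∈ V) (hb : b ∈ V)
    (hfib : ∀ q ∈ convexHull ℝ (V : Set (Vec n)), ∀ p ∈ convexHull ℝ (V : Set (Vec n)),
      q + p = a + b → v ⬝ᵥ p ≤ v ⬝ᵥ b) :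
    ∃ (c : Vec n) (κ : ℝ), 0 < κ ∧ a ∈ maximizers V c ∧ b ∈ maximizers V (c + κ • v) := by
  classical
  let y : Vec n ⊕ Vec n → Vec n × ℝ :=
    Sum.elim (fun x => (x - a, 0)) (fun x => (x - b, v ⬝ᵥ (x - b)))
  obtain ⟨l, hl, hz⟩ | ⟨f, hf, hfz⟩ := farkas_alternative (V.disjSum V) y (0, 1)
  · rw [Finset.sum_disjSum, Prod.ext_iff] at hz
    simp only [y, Sum.elim_inl, Sum.elim_inr, Prod.fst_add, Prod.snd_add, Prod.fst_sum,
      Prod.snd_sum, Prod.smul_fst, Prod.smul_snd, smul_eq_mul, mul_zero,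
      Finset.sum_const_zero, zero_add] at hz
    obtain ⟨q, hq, p, hp, hqp, hlt⟩ := exists_fiber_lt_of_sum_eq ha hb
      (fun x hx => hl _ (Finset.inl_mem_disjSum.2 hx))
      (fun x hx => hl _ (Finset.inr_mem_disjSum.2 hx)) hz.1 hz.2
    exact absurd (hfib q hq p hp hqp) hlt.not_ge
  obtain ⟨c, hc⟩ := exists_apply_eq_dotProduct_add f
  refine ⟨c, f (0, 1), hfz, mem_maximizers.2 ⟨ha, fun x hx => ?_⟩,
    mem_maximizers.2 ⟨hb, fun x hx => ?_⟩⟩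
  · have := hf (.inl x) (Finset.inl_mem_disjSum.2 hx)
    rw [show y (.inl x) = (x - a, 0) from rfl, hc, zero_mul, add_zero, dotProduct_sub] at this
    linarith
  · have := hf (.inr x) (Finset.inr_mem_disjSum.2 hx)
    rw [show y (.inr x) = (x - b, v ⬝ᵥ (x - b)) from rfl, hc] at this
    simp only [dotProduct_sub, add_dotProduct, smul_dotProduct, smul_eq_mul] at this ⊢
    linarith

end LowerFaces

theorem stmt6_general {n : ℕ} (P : Set (Vec n)) (v : Vec n)
    (hP : IsPolytope P) (hor : Oriented P v)
    (F G : Set (Vec n))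
    (hFG : InFphi P v F G)
    (tF bG : Vec n)
    (htF : tF ∈ F ∧ IsFace P {tF} ∧ ∀ y ∈ F, dot v y ≤ dot v tF)
    (hbG : bG ∈ G ∧ IsFace P {bG} ∧ ∀ y ∈ G, dot v bG ≤ dot v y) :
    Relation.ReflTransGen (edgeCover P v) tF bG := by
  obtain ⟨V, rfl⟩ := hP
  have ha := isFaceOf_singleton_of_isFace htF.2.1
  have hb := isFaceOf_singleton_of_isFace hbG.2.1
  obtain ⟨c, κ, hκ, hac, hbc⟩ := exists_mem_maximizers_of_fiber
    (ha.subset (Finset.mem_singleton_self tF)) (hb.subset (Finset.mem_singleton_self bG))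
    fun q hq p hp hqp => hFG.dotProduct_le htF.1 hbG.1 hq hp hqp
  exact reflTransGen_edgeCover_of_mem_maximizers hor hb hbc ha hκ (by rwa [zero_smul, add_zero])

/-- For a polytope `P` oriented by `v`, if `(F, G) ∈ F^φ` then
`top(F) ≤ bot(G)` in the partial order induced by `v` on the vertices of `P` (the transitive
closure of the edge covering relation). -/
theorem stmt6 {n : ℕ} (P : Set (Vec n)) (v : Vec n)
    (hP : IsPolytope P) (hor : Oriented P v)
    (F G : Set (Vec n)) (hF : IsFace P F) (hG : IsFace P G)
    (hFne : F.Nonempty) (hGne : G.Nonempty) (hFG : InFphi P v F G)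
    (tF bG : Vec n)
    (htF : tF ∈ F ∧ IsFace P {tF} ∧ ∀ y ∈ F, dot v y ≤ dot v tF)
    (hbG : bG ∈ G ∧ IsFace P {bG} ∧ ∀ y ∈ G, dot v bG ≤ dot v y) :
    Relation.ReflTransGen (edgeCover P v) tF bG :=
  stmt6_general P v hP hor F G hFG tF bG htF hbG
end
end

section
/- Let P and Q be two polytopes in ℝⁿ such that the normal fan of P refines the normal fan of Q, both positively oriented by the same vector v ∈ ℝⁿ, and let θ be the coarsening projection from P to Q. Then for all nonempty faces F, G of Q: cone(−N_Q(F) ∪ N_Q(G)) is the union over F' ∈ θ⁻¹(F) and G' ∈ θ⁻¹(G) of the cones cone(−N_P(F') ∪ N_P(G')); consequently (F,G) ∈ Im Δ_{(Q,v)} if and only if there exist faces F', G' of P with θ(F') = F, θ(G') = G and (F',G') ∈ Im Δ_{(P,v)}, i.e. the coarsening projection commutes with the cellular maps Δ_{(P,v)} and Δ_{(Q,v)}. -/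
open scoped BigOperators

noncomputable section

/-- The normal fan of `P` refines the normal fan of `Q`. -/
def NormalFanRefines {n : ℕ} (P Q : Set (Vec n)) : Prop :=
  (∀ G : Set (Vec n), IsFace Q G → G.Nonempty →
      ∃ S : Set (Set (Vec n)),
        (∀ C ∈ S, ∃ F, IsFace P F ∧ F.Nonempty ∧ C = normalCone P F) ∧
        normalCone Q G = ⋃₀ S) ∧
  (⋃ F ∈ {F : Set (Vec n) | IsFace P F ∧ F.Nonempty}, normalCone P F) =
    ⋃ G ∈ {G : Set (Vec n) | IsFace Q G ∧ G.Nonempty}, normalCone Q G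

/-- `F` is the image of the face `F'` of `P` under the coarsening projection `θ : L(P) → L(Q)`:
`N_Q(F)` is the minimal normal cone of `Q` containing `N_P(F')`. -/
def CoarsenTo {n : ℕ} (P Q : Set (Vec n)) (F' F : Set (Vec n)) : Prop :=
  IsFace Q F ∧ F.Nonempty ∧ normalCone P F' ⊆ normalCone Q F ∧
    ∀ G : Set (Vec n), IsFace Q G → G.Nonempty → normalCone P F' ⊆ normalCone Q G →
      normalCone Q F ⊆ normalCone Q G

/-! ### Auxiliary lemmas -/

lemma dot_zero_left {n : ℕ} (x : Vec n) : dot 0 x = 0 := by simp [dot]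

lemma dot_add_left {n : ℕ} (a b x : Vec n) : dot (a + b) x = dot a x + dot b x := by
  simp [dot, add_mul, Finset.sum_add_distrib]

lemma dot_sub_left {n : ℕ} (a b x : Vec n) : dot (a - b) x = dot a x - dot b x := by
  simp [dot, sub_mul, Finset.sum_sub_distrib]

lemma dot_smul_left {n : ℕ} (t : ℝ) (a x : Vec n) : dot (t • a) x = t * dot a x := by
  simp only [dot, Pi.smul_apply, smul_eq_mul, Finset.mul_sum]
  exact Finset.sum_congr rfl fun i _ => by ring

lemma isLinearMap_dot {n : ℕ} (a : Vec n) : IsLinearMap ℝ (dot a) := by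
  constructor
  · intro x y; simp [dot, mul_add, Finset.sum_add_distrib]
  · intro t x
    simp only [dot, Pi.smul_apply, smul_eq_mul, Finset.mul_sum]
    exact Finset.sum_congr rfl fun i _ => by ring

lemma hull_le {n : ℕ} {S : Finset (Vec n)} {c : Vec n} {M : ℝ}
    (h : ∀ y ∈ S, dot c y ≤ M) {x : Vec n}
    (hx : x ∈ convexHull ℝ (S : Set (Vec n))) : dot c x ≤ M := by
  have hsub : convexHull ℝ (S : Set (Vec n)) ⊆ {w | dot c w ≤ M} :=
    convexHull_min (fun y hy => h y (Finset.mem_coe.mp hy))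
      (convex_halfSpace_le (isLinearMap_dot c) M)
  exact hsub hx

lemma hull_ge {n : ℕ} {S : Finset (Vec n)} {c : Vec n} {M : ℝ}
    (h : ∀ y ∈ S, M ≤ dot c y) {x : Vec n}
    (hx : x ∈ convexHull ℝ (S : Set (Vec n))) : M ≤ dot c x := by
  have hsub : convexHull ℝ (S : Set (Vec n)) ⊆ {w | M ≤ dot c w} :=
    convexHull_min (fun y hy => h y (Finset.mem_coe.mp hy))
      (convex_halfSpace_ge (isLinearMap_dot c) M)
  exact hsub hx

lemma nc_zero {n : ℕ} {P F : Set (Vec n)} (hFP : F ⊆ P) : (0 : Vec n) ∈ normalCone P F := by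
  intro x hx
  exact ⟨hFP hx, fun y _ => by rw [dot_zero_left, dot_zero_left]⟩

lemma nc_add {n : ℕ} {P F : Set (Vec n)} {a b : Vec n}
    (ha : a ∈ normalCone P F) (hb : b ∈ normalCone P F) : a + b ∈ normalCone P F := by
  intro x hx
  obtain ⟨hxP, hxa⟩ := ha hx
  obtain ⟨-, hxb⟩ := hb hx
  refine ⟨hxP, fun y hy => ?_⟩
  rw [dot_add_left, dot_add_left]
  exact add_le_add (hxa y hy) (hxb y hy)

lemma nc_smul {n : ℕ} {P F : Set (Vec n)} {t : ℝ} (ht : 0 ≤ t) {a : Vec n}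
    (ha : a ∈ normalCone P F) : t • a ∈ normalCone P F := by
  intro x hx
  obtain ⟨hxP, hxa⟩ := ha hx
  refine ⟨hxP, fun y hy => ?_⟩
  rw [dot_smul_left, dot_smul_left]
  exact mul_le_mul_of_nonneg_left (hxa y hy) ht

lemma nc_sum {n k : ℕ} {P F : Set (Vec n)} (hFP : F ⊆ P) (g : Fin k → Vec n)
    (hg : ∀ i, g i ∈ normalCone P F) : ∑ i, g i ∈ normalCone P F :=
  Finset.sum_induction g (· ∈ normalCone P F) (fun _ _ ha hb => nc_add ha hb)
    (nc_zero hFP) (fun i _ => hg i)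

lemma coneOf_mono {n : ℕ} {X Y : Set (Vec n)} (h : X ⊆ Y) : coneOf X ⊆ coneOf Y := by
  rintro v ⟨k, x, l, hx, hl, rfl⟩
  exact ⟨k, x, l, fun i => h (hx i), hl, rfl⟩

lemma mem_coneOf_sub {n : ℕ} {A B : Set (Vec n)} {a b : Vec n}
    (ha : a ∈ A) (hb : b ∈ B) : b - a ∈ coneOf ((Neg.neg '' A) ∪ B) := by
  refine ⟨2, ![-a, b], ![1, 1], ?_, ?_, ?_⟩
  · intro i; fin_cases i
    · exact Or.inl ⟨a, ha, rfl⟩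
    · exact Or.inr hb
  · intro i; fin_cases i <;> norm_num
  · simp [Fin.sum_univ_two]
    abel

lemma coneOf_nc_decomp {n : ℕ} {P₁ F₁ P₂ F₂ : Set (Vec n)}
    (h1 : F₁ ⊆ P₁) (h2 : F₂ ⊆ P₂) {x : Vec n}
    (hx : x ∈ coneOf ((Neg.neg '' normalCone P₁ F₁) ∪ normalCone P₂ F₂)) :
    ∃ a ∈ normalCone P₁ F₁, ∃ b ∈ normalCone P₂ F₂, x = b - a := by
  classical
  obtain ⟨k, xs, l, hxs, hl, rfl⟩ := hx
  set A := normalCone P₁ F₁ with hA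
  set aa : Fin k → Vec n := fun i => if xs i ∈ Neg.neg '' A then -(xs i) else 0 with haadef
  set bb : Fin k → Vec n := fun i => if xs i ∈ Neg.neg '' A then 0 else xs i with hbbdef
  have haa : ∀ i, aa i ∈ A := by
    intro i
    by_cases h : xs i ∈ Neg.neg '' A
    · simp only [haadef, if_pos h]
      obtain ⟨w, hw, hwe⟩ := h
      rw [← hwe, neg_neg]
      exact hw
    · simp only [haadef, if_neg h]
      exact nc_zero h1
  have hbb : ∀ i, bb i ∈ normalCone P₂ F₂ := by
    intro i
    by_cases h : xs i ∈ Neg.neg '' A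
    · simp only [hbbdef, if_pos h]
      exact nc_zero h2
    · simp only [hbbdef, if_neg h]
      rcases hxs i with h' | h'
      · exact absurd h' h
      · exact h'
  have hxi : ∀ i, xs i = bb i - aa i := by
    intro i
    by_cases h : xs i ∈ Neg.neg '' A
    · simp only [haadef, hbbdef, if_pos h]
      abel
    · simp only [haadef, hbbdef, if_neg h]
      abel
  refine ⟨∑ i, l i • aa i, nc_sum h1 _ (fun i => nc_smul (hl i) (haa i)),
    ∑ i, l i • bb i, nc_sum h2 _ (fun i => nc_smul (hl i) (hbb i)), ?_⟩
  rw [← Finset.sum_sub_distrib]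
  exact Finset.sum_congr rfl fun i _ => by rw [hxi i, smul_sub]

/-- The key lemma: for every `a ∈ N_Q(F)` there is a nonempty face `F'` of `P` with
`a ∈ N_P(F')` and `θ(F') = F`.  We take `F'` to be the face of `P` in direction
`a + ε c` where `c` is a defining functional of `F` and `ε > 0` is small. -/
lemma key_lemma {n : ℕ} {P Q : Set (Vec n)} (hP : IsPolytope P)
    (hcov : ∀ G : Set (Vec n), IsFace Q G → G.Nonempty →
      ∃ S : Set (Set (Vec n)),
        (∀ C ∈ S, ∃ F, IsFace P F ∧ F.Nonempty ∧ C = normalCone P F) ∧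
        normalCone Q G = ⋃₀ S)
    {F : Set (Vec n)} (hF : IsFace Q F) (hFne : F.Nonempty)
    {a : Vec n} (ha : a ∈ normalCone Q F) :
    ∃ F', IsFace P F' ∧ F'.Nonempty ∧ a ∈ normalCone P F' ∧ CoarsenTo P Q F' F := by
  classical
  obtain ⟨c, hc⟩ := hF
  have hFQ : F ⊆ Q := by rw [hc]; exact fun x hx => hx.1
  have hcF : c ∈ normalCone Q F := by
    intro x hx; rw [hc] at hx; exact hx
  obtain ⟨S, hS1, hS2⟩ := hcov F ⟨c, hc⟩ hFne
  -- P is nonempty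
  have h0 : (0 : Vec n) ∈ normalCone Q F := nc_zero hFQ
  have hPne : P.Nonempty := by
    rw [hS2] at h0
    obtain ⟨C, hCS, hC0⟩ := h0
    obtain ⟨F0, hF0, hF0ne, rfl⟩ := hS1 C hCS
    obtain ⟨x, hx⟩ := hF0ne
    obtain ⟨d, hd⟩ := hF0
    exact ⟨x, by rw [hd] at hx; exact hx.1⟩
  obtain ⟨Sf, rfl⟩ := hP
  have hSfne : Sf.Nonempty := by
    by_contra h
    rw [Finset.not_nonempty_iff_eq_empty] at h
    rw [h] at hPne
    simp at hPne
  obtain ⟨zM, hzMS, hzM⟩ := Sf.exists_max_image (fun y => dot a y) hSfne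
  -- the choice of a small ε > 0
  obtain ⟨ε, hε, hkey⟩ : ∃ ε : ℝ, 0 < ε ∧ ∀ x ∈ convexHull ℝ (↑Sf : Set (Vec n)),
      (∀ y ∈ convexHull ℝ (↑Sf : Set (Vec n)),
        dot (a + ε • c) y ≤ dot (a + ε • c) x) →
      ∀ y ∈ convexHull ℝ (↑Sf : Set (Vec n)), dot a y ≤ dot a x := by
    by_cases hT : (Sf.filter (fun y => dot a y < dot a zM)).Nonempty
    · -- main case
      obtain ⟨tm, htmT, htm⟩ := (Sf.filter (fun y => dot a y < dot a zM)).exists_max_image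
        (fun y => dot a y) hT
      obtain ⟨zc, hzcS, hzc⟩ := Sf.exists_max_image (fun y => dot c y) hSfne
      obtain ⟨wc, hwcS, hwc⟩ := Sf.exists_min_image (fun y => dot c y) hSfne
      obtain ⟨wg, hwgS, hwg⟩ := Sf.exists_min_image (fun y => dot a y) hSfne
      set M := dot a zM with hM
      set δ := M - dot a tm with hδdef
      have hδ : 0 < δ := sub_pos.mpr (Finset.mem_filter.mp htmT).2
      set R := dot c zc - dot c wc with hRdef
      have hR0 : 0 ≤ R := sub_nonneg.mpr (hwc zc hzcS)
      set ε := δ / (R + 1) with hεdef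
      have hε : 0 < ε := div_pos hδ (by linarith)
      refine ⟨ε, hε, ?_⟩
      set f := a + ε • c with hfdef
      obtain ⟨zf, hzfS, hzf⟩ := Sf.exists_max_image (fun y => dot f y) hSfne
      set Mf := dot f zf with hMf
      set γ := δ - ε * R with hγdef
      have hεR : ε * (R + 1) = δ := by
        rw [hεdef]; field_simp
      have hγ0 : 0 < γ := by
        have : ε * R + ε = δ := by rw [← hεR]; ring
        rw [hγdef]; linarith
      set K := (M - dot a wg) / γ + 1 with hKdef
      have hMwg : dot a wg ≤ M := hwg zM hzMS
      have hK1 : 1 ≤ K := by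
        have : 0 ≤ (M - dot a wg) / γ := div_nonneg (by linarith) hγ0.le
        rw [hKdef]; linarith
      have hvert : ∀ y ∈ Sf, M - K * (Mf - dot f y) ≤ dot a y := by
        intro y hy
        have hfy : dot f y ≤ Mf := hzf y hy
        by_cases hyM : dot a y = M
        · have : 0 ≤ K * (Mf - dot f y) := mul_nonneg (by linarith) (by linarith)
          linarith
        · have hyT : y ∈ Sf.filter (fun y => dot a y < dot a zM) :=
            Finset.mem_filter.mpr ⟨hy, lt_of_le_of_ne (hzM y hy) hyM⟩
          have h1 : dot a y ≤ M - δ := by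
            have := htm y hyT
            rw [hδdef]; linarith
          have h2 : dot f y ≤ Mf - γ := by
            have e1 : dot f y = dot a y + ε * dot c y := by
              rw [hfdef, dot_add_left, dot_smul_left]
            have e2 : dot f zM = M + ε * dot c zM := by
              rw [hfdef, dot_add_left, dot_smul_left, hM]
            have h3 : dot f zM ≤ Mf := hzf zM hzMS
            have h4 : dot c y ≤ dot c zc := hzc y hy
            have h5 : dot c wc ≤ dot c zM := hwc zM hzMS
            have h6 : ε * dot c y ≤ ε * dot c zc := mul_le_mul_of_nonneg_left h4 hε.le
            have h7 : ε * dot c wc ≤ ε * dot c zM := mul_le_mul_of_nonneg_left h5 hε.le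
            have h8 : γ = δ - ε * (dot c zc - dot c wc) := by rw [hγdef, hRdef]
            have h9 : ε * (dot c zc - dot c wc) = ε * dot c zc - ε * dot c wc := by ring
            linarith
          have h9 : γ ≤ Mf - dot f y := by linarith
          have h10 : M - dot a wg ≤ K * γ := by
            rw [hKdef, add_mul, div_mul_cancel₀ _ hγ0.ne', one_mul]
            linarith
          have h11 : dot a wg ≤ dot a y := hwg y hy
          have h12 : K * γ ≤ K * (Mf - dot f y) :=
            mul_le_mul_of_nonneg_left h9 (by linarith)
          linarith
      intro x hx hmax y hy
      have hfx : dot f x = Mf := by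
        have hle : dot f x ≤ Mf := hull_le (fun w hw => hzf w hw) hx
        have hge : Mf ≤ dot f x := hmax zf (subset_convexHull ℝ _ hzfS)
        linarith
      have hgx : M ≤ dot a x := by
        have hvert2 : ∀ w ∈ Sf, M - K * Mf ≤ dot (a - K • f) w := by
          intro w hw
          rw [dot_sub_left, dot_smul_left]
          have := hvert w hw
          linarith
        have := hull_ge hvert2 hx
        rw [dot_sub_left, dot_smul_left, hfx] at this
        linarith
      have hgy : dot a y ≤ M := hull_le (fun w hw => hzM w hw) hy
      linarith
    · -- degenerate case: all vertices maximize a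
      refine ⟨1, one_pos, ?_⟩
      have hall : ∀ y ∈ Sf, dot a y = dot a zM := by
        intro y hy
        by_contra hne
        exact hT ⟨y, Finset.mem_filter.mpr ⟨hy, lt_of_le_of_ne (hzM y hy) hne⟩⟩
      intro x hx _ y hy
      have h1 : dot a zM ≤ dot a x := hull_ge (fun w hw => (hall w hw).ge) hx
      have h2 : dot a y ≤ dot a zM := hull_le (fun w hw => (hall w hw).le) hy
      linarith
  -- the face F' of P in direction a + ε c
  set f := a + ε • c with hfdef
  set F' := {x ∈ convexHull ℝ (↑Sf : Set (Vec n)) |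
    ∀ y ∈ convexHull ℝ (↑Sf : Set (Vec n)), dot f y ≤ dot f x} with hF'def
  have hfaceF' : IsFace (convexHull ℝ (↑Sf : Set (Vec n))) F' := ⟨f, hF'def⟩
  obtain ⟨zf, hzfS, hzf⟩ := Sf.exists_max_image (fun y => dot f y) hSfne
  have hzfP : zf ∈ convexHull ℝ (↑Sf : Set (Vec n)) := subset_convexHull ℝ _ hzfS
  have hF'ne : F'.Nonempty :=
    ⟨zf, hzfP, fun y hy => hull_le (fun w hw => hzf w hw) hy⟩
  have haF' : a ∈ normalCone (convexHull ℝ (↑Sf : Set (Vec n))) F' := by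
    intro x hx
    exact ⟨hx.1, hkey x hx.1 hx.2⟩
  have hfF' : f ∈ normalCone (convexHull ℝ (↑Sf : Set (Vec n))) F' := by
    intro x hx
    exact hx
  -- f ∈ N_Q(F)
  have hfQ : f ∈ normalCone Q F := by
    rw [hfdef]
    exact nc_add ha (nc_smul hε.le hcF)
  -- N_P(F') ⊆ N_Q(F)
  have hsub : normalCone (convexHull ℝ (↑Sf : Set (Vec n))) F' ⊆ normalCone Q F := by
    rw [hS2] at hfQ ⊢
    obtain ⟨C, hCS, hfC⟩ := hfQ
    obtain ⟨F'', hF''face, hF''ne, rfl⟩ := hS1 C hCS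
    have hF''sub : F'' ⊆ F' := hfC
    intro d hd
    refine Set.mem_sUnion.mpr ⟨normalCone (convexHull ℝ (↑Sf : Set (Vec n))) F'', hCS, ?_⟩
    exact fun x hx => hd (hF''sub hx)
  -- minimality
  have hmin : ∀ G, IsFace Q G → G.Nonempty →
      normalCone (convexHull ℝ (↑Sf : Set (Vec n))) F' ⊆ normalCone Q G →
      normalCone Q F ⊆ normalCone Q G := by
    intro G hGface hGne hsubG
    have hfG := hsubG hfF'
    have hGF : G ⊆ F := by
      intro x hxG
      have hx := hfG hxG
      obtain ⟨z, hzF⟩ := hFne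
      have hzQ : z ∈ Q := hFQ hzF
      have hza : ∀ y ∈ Q, dot a y ≤ dot a z := (ha hzF).2
      have hzc2 : ∀ y ∈ Q, dot c y ≤ dot c z := by
        rw [hc] at hzF; exact hzF.2
      have h1 : dot f z ≤ dot f x := hx.2 z hzQ
      have h2 : dot a x ≤ dot a z := hza x hx.1
      have h3 : dot c x ≤ dot c z := hzc2 x hx.1
      have h4 : dot c x = dot c z := by
        rw [hfdef, dot_add_left, dot_smul_left, dot_add_left, dot_smul_left] at h1
        nlinarith
      rw [hc]
      exact ⟨hx.1, fun y hy => h4 ▸ hzc2 y hy⟩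
    intro d hd x hxG
    exact hd (hGF hxG)
  exact ⟨F', hfaceF', hF'ne, haF', ⟨c, hc⟩, hFne, hsub, hmin⟩

/-- Let the normal fan of `P` refine the normal fan of `Q`, both positively
oriented by `v`, with coarsening projection `θ`. For nonempty faces `F, G` of `Q`:
`cone(-N_Q(F) ∪ N_Q(G))` is the union over `F' ∈ θ⁻¹(F)`, `G' ∈ θ⁻¹(G)` of the cones
`cone(-N_P(F') ∪ N_P(G'))`; consequently `(F, G) ∈ Im Δ_{(Q,v)}` iff there are faces `F', G'`
of `P` with `θ(F') = F`, `θ(G') = G` and `(F', G') ∈ Im Δ_{(P,v)}`. -/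
theorem stmt11 {n : ℕ} (P Q : Set (Vec n)) (v : Vec n)
    (hP : IsPolytope P) (hQ : IsPolytope Q) (href : NormalFanRefines P Q)
    (hposP : PosOriented P v) (hposQ : PosOriented Q v)
    (F G : Set (Vec n)) (hF : IsFace Q F) (hG : IsFace Q G)
    (hFne : F.Nonempty) (hGne : G.Nonempty) :
    (coneOf ((Neg.neg '' normalCone Q F) ∪ normalCone Q G) =
      {x | ∃ F' G' : Set (Vec n), IsFace P F' ∧ F'.Nonempty ∧ IsFace P G' ∧ G'.Nonempty ∧
          CoarsenTo P Q F' F ∧ CoarsenTo P Q G' G ∧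
          x ∈ coneOf ((Neg.neg '' normalCone P F') ∪ normalCone P G')}) ∧
    (v ∈ coneOf ((Neg.neg '' normalCone Q F) ∪ normalCone Q G) ↔
      ∃ F' G' : Set (Vec n), IsFace P F' ∧ F'.Nonempty ∧ IsFace P G' ∧ G'.Nonempty ∧
        CoarsenTo P Q F' F ∧ CoarsenTo P Q G' G ∧
        v ∈ coneOf ((Neg.neg '' normalCone P F') ∪ normalCone P G')) := by
  obtain ⟨hcov, -⟩ := href
  have hFQ : F ⊆ Q := by obtain ⟨c, hc⟩ := hF; rw [hc]; exact fun x hx => hx.1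
  have hGQ : G ⊆ Q := by obtain ⟨c, hc⟩ := hG; rw [hc]; exact fun x hx => hx.1
  have heq : coneOf ((Neg.neg '' normalCone Q F) ∪ normalCone Q G) =
      {x | ∃ F' G' : Set (Vec n), IsFace P F' ∧ F'.Nonempty ∧ IsFace P G' ∧ G'.Nonempty ∧
          CoarsenTo P Q F' F ∧ CoarsenTo P Q G' G ∧
          x ∈ coneOf ((Neg.neg '' normalCone P F') ∪ normalCone P G')} := by
    ext x
    constructor
    · intro hx
      obtain ⟨aa, haa, bb, hbb, rfl⟩ := coneOf_nc_decomp hFQ hGQ hx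
      obtain ⟨F', hF'1, hF'2, haF', hcoF⟩ := key_lemma hP hcov hF hFne haa
      obtain ⟨G', hG'1, hG'2, hbG', hcoG⟩ := key_lemma hP hcov hG hGne hbb
      exact ⟨F', G', hF'1, hF'2, hG'1, hG'2, hcoF, hcoG, mem_coneOf_sub haF' hbG'⟩
    · rintro ⟨F', G', -, -, -, -, hcoF, hcoG, hx⟩
      exact coneOf_mono
        (Set.union_subset_union (Set.image_mono hcoF.2.2.1) hcoG.2.2.1) hx
  refine ⟨heq, ?_⟩
  rw [heq]
  exact Iff.rfl
end
end
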